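/- arXiv:1405.2037 — 10 statements merged into one kernel-verified Lean document; each statement's English description precedes it below -/
import Mathlib

section
/- The projection of the cone of n×n Euclidean distance matrices onto any subset E of off-diagonal entries is a closed subset of R^E. -/
/-!
Every configuration of `n` points embeds isometrically into `ℝⁿ`, so the projection is the
image of the map sending `q : Fin n → ℝⁿ` to its squared edge lengths `‖q i - q j‖²`, `ij ∈ E`.
This map is not proper, since each connected component of the graph `E` can be translated
freely; pinning one chosen vertex of every component at the origin removes that freedom. In a
pinned configuration every point is joined to the origin by a path of fewer than `n` edges, so
bounded edge lengths bound the whole configuration: preimages of bounded sets are compact, and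
the image is closed.
-/

open Bornology Metric Module

/-- `D` is a Euclidean distance matrix: it is realized by points in some
Euclidean space. -/
def IsEDM {n : ℕ} (D : Matrix (Fin n) (Fin n) ℝ) : Prop :=
  ∃ (k : ℕ) (p : Fin n → EuclideanSpace ℝ (Fin k)), ∀ i j, D i j = dist (p i) (p j) ^ 2

theorem isClosed_image_of_isBounded_inter_preimage {X Y : Type*} [PseudoMetricSpace X]
    [ProperSpace X] [MetricSpace Y] {f : X → Y} (hf : Continuous f) {S : Set X}
    (hS : IsClosed S) (hbdd : ∀ B, IsBounded B → IsBounded (S ∩ f ⁻¹' B)) :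
    IsClosed (f '' S) := by
  refine isClosed_of_closure_subset fun y hy => ?_
  set K := S ∩ f ⁻¹' closedBall y 1
  have hK : IsCompact K :=
    isCompact_of_isClosed_isBounded (hS.inter (isClosed_closedBall.preimage hf))
      (hbdd _ isBounded_closedBall)
  have hsub : ball y 1 ∩ f '' S ⊆ f '' K := by
    rintro _ ⟨hz, x, hx, rfl⟩
    exact ⟨x, ⟨hx, ball_subset_closedBall hz⟩, rfl⟩
  have hy' : y ∈ closure (ball y 1 ∩ f '' S) :=
    isOpen_ball.inter_closure ⟨mem_ball_self one_pos, hy⟩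
  exact Set.image_mono Set.inter_subset_left
    ((hK.image hf).isClosed.closure_subset_iff.2 hsub hy')

theorem exists_linearIsometry_euclideanSpace {V : Type*} [NormedAddCommGroup V]
    [InnerProductSpace ℝ V] [FiniteDimensional ℝ V] {m : ℕ} (h : finrank ℝ V ≤ m) :
    Nonempty (V →ₗᵢ[ℝ] EuclideanSpace ℝ (Fin m)) := by
  let b := stdOrthonormalBasis ℝ V
  let e : Fin (finrank ℝ V) → EuclideanSpace ℝ (Fin m) :=
    fun i => EuclideanSpace.single (Fin.castLE h i) 1
  have he : Orthonormal ℝ e := EuclideanSpace.orthonormal_single.comp _ (Fin.castLE_injective h)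
  refine ⟨(b.toBasis.constr ℝ e).isometryOfOrthonormal (v := b.toBasis)
    (by simp [b.orthonormal]) ?_⟩
  convert he using 1
  ext1 i
  exact b.toBasis.constr_basis ℝ e i

theorem exists_euclideanSpace_isometric {ι V : Type*} [Fintype ι] [NormedAddCommGroup V]
    [InnerProductSpace ℝ V] (p : ι → V) {m : ℕ} (hm : Fintype.card ι ≤ m) :
    ∃ q : ι → EuclideanSpace ℝ (Fin m), ∀ i j, dist (q i) (q j) = dist (p i) (p j) := by
  let W := Submodule.span ℝ (Set.range p)
  have : FiniteDimensional ℝ W := FiniteDimensional.span_of_finite ℝ (Set.finite_range p)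
  obtain ⟨L⟩ :=
    exists_linearIsometry_euclideanSpace (V := W) ((finrank_range_le_card p).trans hm)
  exact ⟨fun i => L ⟨p i, Submodule.subset_span ⟨i, rfl⟩⟩, fun i j => L.dist_map _ _⟩

theorem dist_le_length_mul_of_walk {V X : Type*} [PseudoMetricSpace X]
    {G : SimpleGraph V} (q : V → X) {C : ℝ} (h : ∀ u v, G.Adj u v → dist (q u) (q v) ≤ C)
    {a b : V} (w : G.Walk a b) : dist (q a) (q b) ≤ w.length * C := by
  induction w with
  | nil => simp
  | @cons a b c hadj w ih =>
    calc dist (q a) (q c) ≤ dist (q a) (q b) + dist (q b) (q c) := dist_triangle _ _ _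
      _ ≤ C + w.length * C := add_le_add (h _ _ hadj) ih
      _ = (w.cons hadj).length * C := by rw [SimpleGraph.Walk.length_cons]; push_cast; ring

theorem dist_le_card_mul_of_reachable {V X : Type*} [Fintype V] [PseudoMetricSpace X]
    {G : SimpleGraph V} (q : V → X) {C : ℝ} (hC : 0 ≤ C)
    (h : ∀ u v, G.Adj u v → dist (q u) (q v) ≤ C) {a b : V} (hab : G.Reachable a b) :
    dist (q a) (q b) ≤ Fintype.card V * C := by
  classical
  obtain ⟨w⟩ := hab
  calc dist (q a) (q b) ≤ w.bypass.length * C := dist_le_length_mul_of_walk q h w.bypass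
    _ ≤ Fintype.card V * C := by
      gcongr
      exact_mod_cast w.bypass_isPath.length_lt.le

section EdgeLengths

variable {ι : Type*} (E : Set (ι × ι))

def edgeSqDist {X : Type*} [PseudoMetricSpace X] (q : ι → X) (e : E) : ℝ :=
  dist (q e.1.1) (q e.1.2) ^ 2

def edgeGraph : SimpleGraph ι := SimpleGraph.fromRel fun a b => (a, b) ∈ E

noncomputable def componentRep (i : ι) : ι := ((edgeGraph E).connectedComponentMk i).out

variable {E}

theorem reachable_componentRep (i : ι) : (edgeGraph E).Reachable i (componentRep E i) :=
  SimpleGraph.ConnectedComponent.exact ((edgeGraph E).connectedComponentMk i).out_eq.symm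

theorem componentRep_componentRep (i : ι) :
    componentRep E (componentRep E i) = componentRep E i :=
  congrArg Quot.out ((edgeGraph E).connectedComponentMk i).out_eq

theorem componentRep_fst_eq_snd {e : ι × ι} (he : e ∈ E) :
    componentRep E e.1 = componentRep E e.2 := by
  rcases eq_or_ne e.1 e.2 with h | h
  · rw [h]
  · have hadj : (edgeGraph E).Adj e.1 e.2 := (SimpleGraph.fromRel_adj _ _ _).2 ⟨h, Or.inl he⟩
    exact congrArg Quot.out (SimpleGraph.ConnectedComponent.sound hadj.reachable)

theorem dist_le_sqrt_of_edgeGraph_adj {X : Type*} [PseudoMetricSpace X] {q : ι → X} {M : ℝ}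
    (hM : ∀ e, edgeSqDist E q e ≤ M) {u v : ι} (huv : (edgeGraph E).Adj u v) :
    dist (q u) (q v) ≤ √M := by
  apply Real.le_sqrt_of_sq_le
  rcases ((SimpleGraph.fromRel_adj _ _ _).1 huv).2 with h | h
  · exact hM ⟨(u, v), h⟩
  · simpa only [edgeSqDist, dist_comm] using hM ⟨(v, u), h⟩

theorem continuous_edgeSqDist {X : Type*} [PseudoMetricSpace X] :
    Continuous (edgeSqDist E (X := X)) :=
  continuous_pi fun e => ((continuous_apply e.1.1).dist (continuous_apply e.1.2)).pow 2

def pinnedConfigs (E : Set (ι × ι)) (V : Type*) [Zero V] : Set (ι → V) :=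
  {q | ∀ i, q (componentRep E i) = 0}

variable {V : Type*} [NormedAddCommGroup V]

theorem isClosed_pinnedConfigs : IsClosed (pinnedConfigs E V) := by
  simp only [pinnedConfigs, Set.ofPred_forall]
  exact isClosed_iInter fun i => isClosed_eq (continuous_apply _) continuous_const

theorem range_edgeSqDist_eq_image_pinnedConfigs :
    Set.range (edgeSqDist E (X := V)) = edgeSqDist E '' pinnedConfigs E V := by
  refine subset_antisymm ?_ (Set.image_subset_range _ _)
  rintro _ ⟨q, rfl⟩
  refine ⟨fun i => q i - q (componentRep E i), fun i => by simp [componentRep_componentRep], ?_⟩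
  funext e
  simp only [edgeSqDist, dist_eq_norm, componentRep_fst_eq_snd e.2, sub_sub_sub_cancel_right]

theorem isBounded_pinnedConfigs_inter_preimage [Fintype ι] {B : Set (E → ℝ)}
    (hB : IsBounded B) :
    IsBounded (pinnedConfigs E V ∩ edgeSqDist E (X := V) ⁻¹' B) := by
  classical
  obtain ⟨M, hM⟩ := isBounded_iff_forall_norm_le.1 hB
  refine (isBounded_closedBall (x := 0) (r := Fintype.card ι * √M)).subset ?_
  rintro q ⟨hq, hqB⟩
  have hedge : ∀ e, edgeSqDist E q e ≤ M := fun e =>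
    (le_abs_self _).trans ((norm_le_pi_norm (edgeSqDist E q) e).trans (hM _ hqB))
  rw [mem_closedBall_zero_iff, pi_norm_le_iff_of_nonneg (by positivity)]
  intro i
  calc ‖q i‖ = dist (q i) (q (componentRep E i)) := by rw [hq i, dist_zero_right]
    _ ≤ Fintype.card ι * √M := dist_le_card_mul_of_reachable q (Real.sqrt_nonneg M)
        (fun _ _ => dist_le_sqrt_of_edgeGraph_adj hedge) (reachable_componentRep i)

theorem isClosed_range_edgeSqDist [Fintype ι] [ProperSpace V] :
    IsClosed (Set.range (edgeSqDist E (X := V))) := by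
  classical
  rw [range_edgeSqDist_eq_image_pinnedConfigs]
  exact isClosed_image_of_isBounded_inter_preimage continuous_edgeSqDist isClosed_pinnedConfigs
    fun _ => isBounded_pinnedConfigs_inter_preimage

end EdgeLengths

theorem edm_projection_closed_general {n : ℕ} (E : Set (Fin n × Fin n)) :
    IsClosed ((fun (D : Matrix (Fin n) (Fin n) ℝ) (e : E) => D e.val.1 e.val.2) ''
      {D | IsEDM D}) := by
  have himage : (fun (D : Matrix (Fin n) (Fin n) ℝ) (e : E) => D e.val.1 e.val.2) ''
      {D | IsEDM D} = Set.range (edgeSqDist E (X := EuclideanSpace ℝ (Fin n))) := by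
    refine subset_antisymm ?_ ?_
    · rintro _ ⟨D, ⟨k, p, hp⟩, rfl⟩
      obtain ⟨q, hq⟩ := exists_euclideanSpace_isometric p (Fintype.card_fin n).le
      exact ⟨q, funext fun e => by simp [edgeSqDist, hq, hp]⟩
    · rintro _ ⟨q, rfl⟩
      exact ⟨fun i j => dist (q i) (q j) ^ 2, ⟨n, q, fun _ _ => rfl⟩, rfl⟩
  rw [himage]
  exact isClosed_range_edgeSqDist

/-- The projection of the cone of `n × n` Euclidean distance matrices onto any
subset `E` of off-diagonal entries is a closed subset of `ℝ^E`. -/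
theorem edm_projection_closed {n : ℕ} (E : Set (Fin n × Fin n))
    (hE : ∀ e ∈ E, e.1 ≠ e.2) :
    IsClosed ((fun (D : Matrix (Fin n) (Fin n) ℝ) (e : E) => D e.val.1 e.val.2) ''
      {D | IsEDM D}) :=
  edm_projection_closed_general E
end

section
/- If the set L of looped vertices is disconnected from its complement L^c in the graph G (i.e., no edge of E joins a vertex of L with a vertex not in L), then the coordinate projection P(S^n_+) of the positive semidefinite cone is closed. -/
/-!
Since no edge joins a looped vertex to a loopless one, a positive semidefinite `X` can be
replaced, without changing its entries on `E`, by its principal block on the looped vertices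
plus a diagonally dominant matrix carrying its entries on the loopless edges. Every diagonal
entry of the replacement is bounded by a multiple of the largest entry of `P X`: looped
diagonal entries belong to `E`, and the diagonal added on loopless vertices consists of row
sums of entries on `E`. So a bounded part of `P(S^n_+)` lies in the image of a compact set of
positive semidefinite matrices with bounded diagonal, and the image is closed.
-/

open Matrix Filter Topology

namespace Matrix

variable {ι : Type*}

section PosSemidef

variable [Fintype ι]

theorem IsHermitian.posSemidef_add_diagonal_sum_abs [DecidableEq ι] {A : Matrix ι ι ℝ}
    (hA : A.IsHermitian) : (A + diagonal fun i => ∑ j, |A i j|).PosSemidef := by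
  refine .of_dotProduct_mulVec_nonneg (hA.add (isHermitian_diagonal _)) fun x => ?_
  have hsymm : ∀ i j, A j i = A i j := fun i j => by simpa using hA.apply i j
  have hterm : ∀ a u v : ℝ, 0 ≤ |a| * (u ^ 2 + v ^ 2) + 2 * a * u * v := fun a u v => by
    rcases abs_cases a with ⟨h, ha⟩ | ⟨h, ha⟩ <;> rw [h]
    · nlinarith [mul_nonneg ha (sq_nonneg (u + v))]
    · nlinarith [mul_nonneg (neg_nonneg.2 ha.le) (sq_nonneg (u - v))]
  have hexpand : star x ⬝ᵥ (A + diagonal fun i => ∑ j, |A i j|) *ᵥ x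
      = ∑ i, ∑ j, (A i j * x i * x j + |A i j| * x i ^ 2) := by
    rw [star_trivial, add_mulVec, dotProduct_add]
    simp only [dotProduct, mulVec_diagonal]
    simp only [mulVec, dotProduct, Finset.mul_sum, Finset.sum_mul, ← Finset.sum_add_distrib]
    refine Finset.sum_congr rfl fun i _ => Finset.sum_congr rfl fun j _ => by ring
  have hswap : star x ⬝ᵥ (A + diagonal fun i => ∑ j, |A i j|) *ᵥ x
      = ∑ i, ∑ j, (A i j * x i * x j + |A i j| * x j ^ 2) := by
    rw [hexpand, Finset.sum_comm]
    refine Finset.sum_congr rfl fun i _ => Finset.sum_congr rfl fun j _ => ?_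
    rw [hsymm]; ring
  have hsum : 0 ≤ ∑ i, ∑ j, ((A i j * x i * x j + |A i j| * x i ^ 2)
      + (A i j * x i * x j + |A i j| * x j ^ 2)) :=
    Finset.sum_nonneg fun i _ => Finset.sum_nonneg fun j _ => by
      linarith [hterm (A i j) (x i) (x j)]
  simp only [Finset.sum_add_distrib] at hsum hexpand hswap
  linarith

theorem PosSemidef.abs_apply_le {X : Matrix ι ι ℝ} (hX : X.PosSemidef) (i j : ι) :
    |X i j| ≤ (X i i + X j j) / 2 := by
  classical
  have hsymm : X j i = X i j := by simpa using hX.isHermitian.apply i j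
  have key : ∀ s : ℝ, 0 ≤ X i i + 2 * s * X i j + s ^ 2 * X j j := fun s => by
    have h := hX.dotProduct_mulVec_nonneg (Pi.single i 1 + s • Pi.single j 1)
    simp only [star_trivial, mulVec_add, mulVec_smul, mulVec_single, add_dotProduct,
      smul_dotProduct, dotProduct_add, dotProduct_smul, single_dotProduct, smul_eq_mul,
      mul_one, col_apply, op_smul_eq_mul, one_mul] at h
    rw [hsymm] at h
    linear_combination h
  rw [abs_le]
  constructor <;> nlinarith [key 1, key (-1)]

theorem PosSemidef.principalBlock {X : Matrix ι ι ℝ} (hX : X.PosSemidef) (p : ι → Prop)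
    [DecidablePred p] : (of fun i j => if p i ∧ p j then X i j else 0).PosSemidef := by
  classical
  convert hX.conjTranspose_mul_mul_same (diagonal fun i => if p i then 1 else 0) using 1
  ext i j
  by_cases hi : p i <;> by_cases hj : p j <;> simp [diagonal_mul, mul_diagonal, hi, hj]

theorem isClosed_setOf_posSemidef : IsClosed {X : Matrix ι ι ℝ | X.PosSemidef} := by
  have : {X : Matrix ι ι ℝ | X.PosSemidef}
      = {X | Xᴴ = X} ∩ ⋂ x : ι → ℝ, {X | 0 ≤ x ⬝ᵥ X *ᵥ x} := by
    ext X; simp [posSemidef_iff_dotProduct_mulVec, IsHermitian]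
  rw [this]
  exact (isClosed_eq continuous_id.matrix_conjTranspose continuous_id).inter <|
    isClosed_iInter fun x => isClosed_le continuous_const
      (continuous_const.dotProduct (continuous_id.matrix_mulVec continuous_const))

theorem isCompact_setOf_posSemidef_diag_le (R : ℝ) :
    IsCompact {X : Matrix ι ι ℝ | X.PosSemidef ∧ ∀ i, X i i ≤ R} := by
  have hbox : IsCompact (Set.univ.pi fun _ : ι => Set.univ.pi fun _ : ι => Set.Icc (-R) R) :=
    isCompact_univ_pi fun _ => isCompact_univ_pi fun _ => isCompact_Icc
  refine hbox.of_isClosed_subset ?_ fun X ⟨hX, hR⟩ => ?_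
  · simp only [Set.ofPred_and, Set.ofPred_forall]
    exact isClosed_setOf_posSemidef.inter <| isClosed_iInter fun i =>
      isClosed_le ((continuous_apply i).comp (continuous_apply i)) continuous_const
  · simp only [Set.mem_pi, Set.mem_univ, forall_const]
    intro i j
    exact abs_le.1 <| (hX.abs_apply_le i j).trans (by linarith [hR i, hR j])

end PosSemidef

section LoopedVertices

variable (E : Set (ι × ι))

/-- The coordinate projection `P` onto the entries indexed by `E`. -/
def edgeEntries (X : Matrix ι ι ℝ) : E → ℝ := fun e => X e.1.1 e.1.2

open Classical in
noncomputable def looplessPart (X : Matrix ι ι ℝ) : Matrix ι ι ℝ :=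
  of fun i j => if (i, i) ∉ E ∧ (j, j) ∉ E ∧ ((i, j) ∈ E ∨ (j, i) ∈ E) then X i j else 0

open Classical in
noncomputable def edgeNormalForm [Fintype ι] [DecidableEq ι] (X : Matrix ι ι ℝ) :
    Matrix ι ι ℝ :=
  (of fun i j => if (i, i) ∈ E ∧ (j, j) ∈ E then X i j else 0) + looplessPart E X
    + diagonal fun i => ∑ j, |looplessPart E X i j|

variable {E}

theorem continuous_edgeEntries : Continuous (edgeEntries E) :=
  continuous_pi fun e => (continuous_apply e.1.2).comp (continuous_apply e.1.1)

theorem IsHermitian.looplessPart {X : Matrix ι ι ℝ} (hX : X.IsHermitian) :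
    (looplessPart E X).IsHermitian := by
  ext i j
  have hsymm : X j i = X i j := by simpa using hX.apply i j
  simp only [conjTranspose_apply, star_trivial, Matrix.looplessPart, of_apply, hsymm]
  congr 1
  exact propext (by tauto)

theorem looplessPart_apply_of_mem {X : Matrix ι ι ℝ} {i : ι} (hi : (i, i) ∈ E) (j : ι) :
    looplessPart E X i j = 0 :=
  if_neg fun h => h.1 hi

theorem abs_looplessPart_apply_le {X : Matrix ι ι ℝ} (hX : X.IsHermitian) {R : ℝ} (hR0 : 0 ≤ R)
    (hR : ∀ e : E, |edgeEntries E X e| ≤ R) (i j : ι) : |looplessPart E X i j| ≤ R := by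
  have hsymm : X j i = X i j := by simpa using hX.apply i j
  simp only [Matrix.looplessPart, of_apply]
  split_ifs with h
  · rcases h.2.2 with hij | hji
    · exact hR ⟨_, hij⟩
    · exact hsymm ▸ hR ⟨_, hji⟩
  · simpa using hR0

variable [Fintype ι] [DecidableEq ι]

theorem PosSemidef.edgeNormalForm {X : Matrix ι ι ℝ} (hX : X.PosSemidef) :
    (edgeNormalForm E X).PosSemidef := by
  classical
  rw [Matrix.edgeNormalForm, add_assoc]
  exact (hX.principalBlock _).add hX.isHermitian.looplessPart.posSemidef_add_diagonal_sum_abs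

theorem edgeEntries_edgeNormalForm (hdis : ∀ i j, (i, j) ∈ E → ((i, i) ∈ E ↔ (j, j) ∈ E))
    (X : Matrix ι ι ℝ) : edgeEntries E (edgeNormalForm E X) = edgeEntries E X := by
  funext ⟨⟨i, j⟩, hij⟩
  simp only [edgeEntries, Matrix.edgeNormalForm, Matrix.add_apply, of_apply]
  by_cases hi : (i, i) ∈ E
  · have hj : (j, j) ∈ E := (hdis i j hij).1 hi
    simp [hi, hj, looplessPart_apply_of_mem hi, diagonal_apply]
  · have hj : (j, j) ∉ E := fun hj => hi ((hdis i j hij).2 hj)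
    have hne : i ≠ j := by rintro rfl; exact hi hij
    simp [hi, hj, Matrix.looplessPart, hij, diagonal_apply_ne _ hne]

theorem edgeNormalForm_apply_self_le {X : Matrix ι ι ℝ} (hX : X.IsHermitian) {R : ℝ}
    (hR0 : 0 ≤ R) (hR : ∀ e : E, |edgeEntries E X e| ≤ R) (i : ι) :
    edgeNormalForm E X i i ≤ (Fintype.card ι + 2) * R := by
  classical
  have hM := abs_looplessPart_apply_le hX hR0 hR
  have hblock : (if (i, i) ∈ E ∧ (i, i) ∈ E then X i i else 0) ≤ R := by
    split_ifs with h
    · exact (le_abs_self _).trans (hR ⟨_, h.1⟩)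
    · exact hR0
  have hsum : ∑ j, |looplessPart E X i j| ≤ Fintype.card ι * R := by
    calc ∑ j, |looplessPart E X i j| ≤ ∑ _j : ι, R := Finset.sum_le_sum fun j _ => hM i j
      _ = Fintype.card ι * R := by simp
  simp only [Matrix.edgeNormalForm, Matrix.add_apply, of_apply, diagonal_apply_eq]
  linarith [le_abs_self (looplessPart E X i i), hM i i]

theorem edgeEntries_mem_image_posSemidef_diag_le
    (hdis : ∀ i j, (i, j) ∈ E → ((i, i) ∈ E ↔ (j, j) ∈ E)) {X : Matrix ι ι ℝ}
    (hX : X.PosSemidef) {R : ℝ} (hR0 : 0 ≤ R) (hR : ∀ e : E, |edgeEntries E X e| ≤ R) :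
    edgeEntries E X ∈
      edgeEntries E '' {Y | Y.PosSemidef ∧ ∀ i, Y i i ≤ (Fintype.card ι + 2) * R} :=
  ⟨edgeNormalForm E X, ⟨hX.edgeNormalForm, edgeNormalForm_apply_self_le hX.isHermitian hR0 hR⟩,
    edgeEntries_edgeNormalForm hdis X⟩

end LoopedVertices

end Matrix

/-- If the set `L` of looped vertices is disconnected from its complement in the graph
`G = (V, E)` (no edge of `E` joins a vertex of `L` with a vertex not in `L`), then the
coordinate projection of the positive semidefinite cone onto the entries indexed by `E`
is closed. -/
theorem psd_projection_closed_of_disconnected {n : ℕ} (E : Set (Fin n × Fin n))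
    (hdis : ∀ i j : Fin n, (i, j) ∈ E → ((i, i) ∈ E ↔ (j, j) ∈ E)) :
    IsClosed ((fun (X : Matrix (Fin n) (Fin n) ℝ) (e : E) => X e.val.1 e.val.2) ''
      {X | X.PosSemidef}) := by
  let := Fintype.ofFinite E
  change IsClosed (edgeEntries E '' _)
  refine isSeqClosed_iff_isClosed.1 fun y p hy hyp => ?_
  obtain ⟨R, hR⟩ := isBounded_iff_forall_norm_le.1 (Metric.isBounded_range_of_tendsto y hyp)
  have hR0 : 0 ≤ R := (norm_nonneg _).trans (hR _ ⟨0, rfl⟩)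
  have hK := (isCompact_setOf_posSemidef_diag_le ((Fintype.card (Fin n) + 2) * R)).image
    (continuous_edgeEntries (E := E))
  have hyK : ∀ k, y k ∈ edgeEntries E '' _ := fun k => by
    obtain ⟨X, hX : X.PosSemidef, hXy⟩ := hy k
    rw [← hXy]
    exact edgeEntries_mem_image_posSemidef_diag_le hdis hX hR0 fun e =>
      hXy ▸ (norm_le_pi_norm _ e).trans (hR _ ⟨k, rfl⟩)
  obtain ⟨X, hX, rfl⟩ := hK.isClosed.mem_of_tendsto hyp (Eventually.of_forall hyK)
  exact ⟨X, hX.1, rfl⟩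
end

section
/- The restriction of K to the centered matrices S_c is a linear isomorphism onto the hollow matrices S_H, and it maps S_c ∩ S^n_+ onto the cone E^n of Euclidean distance matrices. -/
/-- The map `K(X)_{ij} = X_{ii} + X_{jj} - 2 X_{ij}`. -/
def Kmap {n : ℕ} (X : Matrix (Fin n) (Fin n) ℝ) : Matrix (Fin n) (Fin n) ℝ :=
  Matrix.of fun i j => X i i + X j j - 2 * X i j

open Matrix
open scoped ComplexOrder

theorem Matrix.PosSemidef.exists_eq_gram {𝕜 ι : Type*} [RCLike 𝕜] [Fintype ι]
    {X : Matrix ι ι 𝕜} (hX : X.PosSemidef) :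
    ∃ v : ι → EuclideanSpace 𝕜 ι, gram 𝕜 v = X := by
  classical
  open scoped MatrixOrder in
  obtain ⟨B, rfl⟩ := CStarAlgebra.nonneg_iff_eq_star_mul_self.mp hX.nonneg
  refine ⟨fun i => WithLp.toLp 2 fun k => B k i, ?_⟩
  ext i j
  simp [gram_apply, Matrix.mul_apply, PiLp.inner_apply, mul_comm]

theorem gram_mulVec_one {𝕜 ι E : Type*} [RCLike 𝕜] [Fintype ι] [NormedAddCommGroup E]
    [InnerProductSpace 𝕜 E] (v : ι → E) :
    gram 𝕜 v *ᵥ (fun _ => 1) = fun i => inner 𝕜 (v i) (∑ j, v j) := by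
  ext i
  simp [mulVec, dotProduct, gram_apply, inner_sum]

theorem sum_sub_centroid_eq_zero {ι V : Type*} [Fintype ι] [AddCommGroup V] [Module ℝ V]
    (p : ι → V) : ∑ i, (p i - (Fintype.card ι : ℝ)⁻¹ • ∑ j, p j) = 0 := by
  rcases isEmpty_or_nonempty ι with hι | hι
  · simp
  rw [Finset.sum_sub_distrib, Finset.sum_const, Finset.card_univ, ← Nat.cast_smul_eq_nsmul ℝ,
    smul_smul, mul_inv_cancel₀ (by positivity), one_smul, sub_self]

-- `-½ J D J`, written entrywise.
noncomputable def Tmap {n : ℕ} (D : Matrix (Fin n) (Fin n) ℝ) : Matrix (Fin n) (Fin n) ℝ :=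
  of fun i j =>
    -(D i j - (∑ k, D i k) / n - (∑ k, D k j) / n + (∑ k, ∑ l, D k l) / n ^ 2) / 2

section
variable {n : ℕ} {D X : Matrix (Fin n) (Fin n) ℝ}

theorem Kmap_gram {E : Type*} [NormedAddCommGroup E] [InnerProductSpace ℝ E] (v : Fin n → E) :
    Kmap (gram ℝ v) = of fun i j => dist (v i) (v j) ^ 2 := by
  ext i j
  simp only [Kmap, gram_apply, of_apply, dist_eq_norm, norm_sub_sq_real,
    real_inner_self_eq_norm_sq]
  ring

theorem Tmap_isSymm (hD : D.IsSymm) : (Tmap D).IsSymm := by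
  ext i j
  simp only [Tmap, transpose_apply, of_apply, hD.apply]
  ring

theorem Tmap_mulVec_one (D : Matrix (Fin n) (Fin n) ℝ) : Tmap D *ᵥ (fun _ => 1) = 0 := by
  ext i
  have hn : (n : ℝ) ≠ 0 := Nat.cast_ne_zero.mpr (Fin.pos i).ne'
  simp only [Tmap, mulVec, dotProduct, of_apply, mul_one, Pi.zero_apply]
  rw [← Finset.sum_div, Finset.sum_neg_distrib]
  simp only [Finset.sum_add_distrib, Finset.sum_sub_distrib, Finset.sum_const, Finset.card_univ,
    Fintype.card_fin, nsmul_eq_mul, ← Finset.sum_div]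
  field_simp
  rw [Finset.sum_comm]
  ring

theorem Tmap_Kmap (hX : X.IsSymm) (h1 : X *ᵥ (fun _ => 1) = 0) : Tmap (Kmap X) = X := by
  have hrow : ∀ i, ∑ k, X i k = 0 := fun i => by
    simpa [mulVec, dotProduct] using congrFun h1 i
  have hcol : ∀ j, ∑ k, X k j = 0 := fun j => by simpa only [← hX.apply j] using hrow j
  ext i j
  have hn : (n : ℝ) ≠ 0 := Nat.cast_ne_zero.mpr (Fin.pos i).ne'
  simp only [Tmap, Kmap, of_apply, Finset.sum_add_distrib, Finset.sum_sub_distrib,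
    ← Finset.mul_sum, hrow, hcol, Finset.sum_const, Finset.card_univ, Fintype.card_fin,
    nsmul_eq_mul, mul_zero, sub_zero]
  field_simp
  ring

theorem Kmap_Tmap (hD : D.IsSymm) (h0 : ∀ i, D i i = 0) : Kmap (Tmap D) = D := by
  have hcol : ∀ j, ∑ k, D k j = ∑ k, D j k := fun j => by simp only [hD.apply j]
  ext i j
  simp only [Kmap, Tmap, of_apply, h0, hcol]
  ring

theorem isEDM_Kmap_of_posSemidef (hX : X.PosSemidef) : IsEDM (Kmap X) := by
  obtain ⟨v, rfl⟩ := hX.exists_eq_gram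
  exact ⟨n, v, fun i j => by rw [Kmap_gram, of_apply]⟩

theorem IsEDM.exists_centered_posSemidef (hD : IsEDM D) :
    ∃ X : Matrix (Fin n) (Fin n) ℝ, (X.PosSemidef ∧ X *ᵥ (fun _ => 1) = 0) ∧ Kmap X = D := by
  obtain ⟨k, p, hp⟩ := hD
  set q : Fin n → EuclideanSpace ℝ (Fin k) :=
    fun i => p i - (Fintype.card (Fin n) : ℝ)⁻¹ • ∑ j, p j
  refine ⟨gram ℝ q, ⟨posSemidef_gram ℝ q, ?_⟩, ?_⟩
  · rw [gram_mulVec_one, sum_sub_centroid_eq_zero]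
    exact funext fun i => inner_zero_right (q i)
  · ext i j
    rw [Kmap_gram, of_apply, hp, dist_sub_right]

end

/-- The restriction of `K` to the centered symmetric matrices `S_c` is a linear
isomorphism (i.e. a bijection) onto the hollow symmetric matrices `S_H`, and it maps
`S_c ∩ S^n₊` onto the cone of Euclidean distance matrices. -/
theorem K_isomorphism {n : ℕ} :
    (∀ X Y : Matrix (Fin n) (Fin n) ℝ,
        X.IsSymm → X.mulVec (fun _ => (1 : ℝ)) = 0 →
        Y.IsSymm → Y.mulVec (fun _ => (1 : ℝ)) = 0 →
        Kmap X = Kmap Y → X = Y) ∧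
    (∀ D : Matrix (Fin n) (Fin n) ℝ, D.IsSymm → (∀ i, D i i = 0) →
        ∃ X : Matrix (Fin n) (Fin n) ℝ, X.IsSymm ∧ X.mulVec (fun _ => (1 : ℝ)) = 0 ∧
          Kmap X = D) ∧
    (Kmap '' {X : Matrix (Fin n) (Fin n) ℝ | X.PosSemidef ∧
        X.mulVec (fun _ => (1 : ℝ)) = 0}
      = {D : Matrix (Fin n) (Fin n) ℝ | IsEDM D}) := by
  refine ⟨fun X Y hX hX1 hY hY1 hK => ?_, fun D hD hD0 => ?_, ?_⟩
  · rw [← Tmap_Kmap hX hX1, hK, Tmap_Kmap hY hY1]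
  · exact ⟨Tmap D, Tmap_isSymm hD, Tmap_mulVec_one D, Kmap_Tmap hD hD0⟩
  · ext D
    constructor
    · rintro ⟨X, ⟨hX, -⟩, rfl⟩
      exact isEDM_Kmap_of_posSemidef hX
    · exact IsEDM.exists_centered_posSemidef
end

section
/- S_c ∩ S^n_+ is a face of S^n_+, and for any n×n orthogonal matrix whose first column is e/√n with remaining columns forming the n×(n−1) matrix U, one has S_c ∩ S^n_+ = U S^{n−1}_+ U^T; in particular this face is linearly isomorphic to S^{n−1}_+. -/
/-! For PSD `X`, `Xe = 0` iff `eᵀXe = 0`, so the centred PSD matrices are the zeros in the cone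
of a linear functional that is nonnegative on it, hence a face. Writing the orthogonal matrix as
`W = [u | U]` with `u = e/√n`, orthogonality gives `UUᵀ = I - uuᵀ` and `Uᵀu = 0`; so every PSD
`X` with `Xu = 0` equals `U (UᵀXU) Uᵀ`, and conversely every `UAUᵀ` kills `u`. -/

/-- `F` is a face of the convex set `C`: a convex subset of `C` containing every line
segment of `C` whose relative interior meets it. -/
def IsFaceOf {M : Type*} [AddCommGroup M] [Module ℝ M] (F C : Set M) : Prop :=
  F ⊆ C ∧ Convex ℝ F ∧ ∀ x ∈ C, ∀ y ∈ C, ∀ t : ℝ, t ∈ Set.Ioo (0 : ℝ) 1 →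
    t • x + (1 - t) • y ∈ F → x ∈ F ∧ y ∈ F

open Matrix

section Face

variable {M : Type*} [AddCommGroup M] [Module ℝ M]

theorem isFaceOf_sep_eq_zero {C : Set M} (hC : Convex ℝ C) (f : M →ₗ[ℝ] ℝ)
    (hf : ∀ x ∈ C, 0 ≤ f x) : IsFaceOf {x ∈ C | f x = 0} C := by
  refine ⟨Set.sep_subset _ _, ?_, ?_⟩
  · rintro x ⟨hxC, hx⟩ y ⟨hyC, hy⟩ a b ha hb hab
    exact ⟨hC hxC hyC ha hb hab, by simp [hx, hy]⟩
  · rintro x hx y hy t ⟨ht, ht'⟩ ⟨-, hzero⟩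
    simp only [map_add, map_smul, smul_eq_mul] at hzero
    have hs : (1 - t) ≠ 0 := by linarith
    obtain ⟨hx0, hy0⟩ := (add_eq_zero_iff_of_nonneg (mul_nonneg ht.le (hf x hx))
      (mul_nonneg (by linarith) (hf y hy))).mp hzero
    exact ⟨⟨hx, (mul_eq_zero.mp hx0).resolve_left ht.ne'⟩,
      ⟨hy, (mul_eq_zero.mp hy0).resolve_left hs⟩⟩

end Face

section PosSemidef

variable {n : Type*}

theorem convex_setOf_posSemidef : Convex ℝ {X : Matrix n n ℝ | X.PosSemidef} :=
  fun _ hX _ hY _ _ ha hb _ => (hX.smul ha).add (hY.smul hb)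

variable [Fintype n]

@[simps]
def Matrix.quadFormAtₗ (v : n → ℝ) : Matrix n n ℝ →ₗ[ℝ] ℝ where
  toFun X := v ⬝ᵥ X *ᵥ v
  map_add' X Y := by simp [add_mulVec]
  map_smul' c X := by simp [smul_mulVec]

theorem setOf_posSemidef_mulVec_eq_zero_eq_sep (v : n → ℝ) :
    {X : Matrix n n ℝ | X.PosSemidef ∧ X *ᵥ v = 0} =
      {X ∈ {X : Matrix n n ℝ | X.PosSemidef} | quadFormAtₗ v X = 0} := by
  ext X
  simp only [Set.mem_ofPred_eq, and_congr_right_iff]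
  intro hX
  simpa using (hX.dotProduct_mulVec_zero_iff v).symm

theorem isFaceOf_setOf_posSemidef_mulVec_eq_zero (v : n → ℝ) :
    IsFaceOf {X : Matrix n n ℝ | X.PosSemidef ∧ X *ᵥ v = 0} {X | X.PosSemidef} := by
  rw [setOf_posSemidef_mulVec_eq_zero_eq_sep]
  exact isFaceOf_sep_eq_zero convex_setOf_posSemidef _
    fun X hX => by simpa using hX.dotProduct_mulVec_nonneg v

end PosSemidef

section Orthogonal

variable {R : Type*} [CommRing R] {ι : Type*} {k : ℕ}

theorem mul_transpose_eq_vecMulVec_add_submatrix_succ (W : Matrix ι (Fin (k + 1)) R) :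
    W * Wᵀ = vecMulVec (W · 0) (W · 0) +
      W.submatrix id Fin.succ * (W.submatrix id Fin.succ)ᵀ := by
  ext i j
  simp [mul_apply, Fin.sum_univ_succ, vecMulVec_apply]

variable [Fintype ι]

theorem transpose_submatrix_succ_mulVec_eq_zero {W : Matrix ι (Fin (k + 1)) R}
    (hW : Wᵀ * W = 1) : (W.submatrix id Fin.succ)ᵀ *ᵥ (W · 0) = 0 := by
  ext j
  simpa [mul_apply, mulVec, dotProduct, one_apply] using congrFun (congrFun hW j.succ) 0

theorem sub_vecMulVec_mul_mul_sub_vecMulVec [DecidableEq ι] {X : Matrix ι ι R} (hX : Xᵀ = X)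
    {u : ι → R} (hu : X *ᵥ u = 0) : (1 - vecMulVec u u) * X * (1 - vecMulVec u u) = X := by
  have hu' : u ᵥ* X = 0 := by rw [← mulVec_transpose, hX, hu]
  simp [sub_mul, mul_sub, vecMulVec_mul, mul_vecMulVec, hu, hu']

end Orthogonal

theorem setOf_posSemidef_mulVec_eq_zero_eq_conj {k : ℕ}
    {W : Matrix (Fin (k + 1)) (Fin (k + 1)) ℝ}
    (hW : W ∈ orthogonalGroup (Fin (k + 1)) ℝ) :
    {X : Matrix (Fin (k + 1)) (Fin (k + 1)) ℝ | X.PosSemidef ∧ X *ᵥ (W · 0) = 0} =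
      {X | ∃ A : Matrix (Fin k) (Fin k) ℝ, A.PosSemidef ∧
        X = W.submatrix id Fin.succ * A * (W.submatrix id Fin.succ)ᵀ} := by
  set U := W.submatrix id Fin.succ
  have hUH : Uᴴ = Uᵀ := conjTranspose_eq_transpose_of_trivial U
  have hUUt : U * Uᵀ = 1 - vecMulVec (W · 0) (W · 0) := by
    rw [eq_sub_iff_add_eq', ← mul_transpose_eq_vecMulVec_add_submatrix_succ]
    simpa using (mem_orthogonalGroup_iff _ _).mp hW
  have hUtu : Uᵀ *ᵥ (W · 0) = 0 :=
    transpose_submatrix_succ_mulVec_eq_zero (by simpa using (mem_orthogonalGroup_iff' _ _).mp hW)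
  ext X
  constructor
  · rintro ⟨hX, hXu⟩
    refine ⟨Uᵀ * X * U, by simpa [hUH] using hX.conjTranspose_mul_mul_same U, ?_⟩
    have hXt : Xᵀ = X := by simpa using hX.isHermitian.eq
    calc X = (U * Uᵀ) * X * (U * Uᵀ) := by
          rw [hUUt, sub_vecMulVec_mul_mul_sub_vecMulVec hXt hXu]
      _ = U * (Uᵀ * X * U) * Uᵀ := by simp only [Matrix.mul_assoc]
  · rintro ⟨A, hA, rfl⟩
    refine ⟨by simpa [hUH] using hA.mul_mul_conjTranspose_same U, ?_⟩
    rw [Matrix.mul_assoc, ← mulVec_mulVec, ← mulVec_mulVec, hUtu, mulVec_zero, mulVec_zero]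

/-- `S_c ∩ S^n₊` is a face of `S^n₊`, and for any orthogonal matrix whose first column
is `e/√n`, with `U` the matrix of remaining columns, one has
`S_c ∩ S^n₊ = U S^{n-1}₊ Uᵀ`; in particular this face is linearly isomorphic to
`S^{n-1}₊`. -/
theorem centered_psd_face {m : ℕ} (W : Matrix (Fin (m + 1)) (Fin (m + 1)) ℝ)
    (hW : W ∈ Matrix.orthogonalGroup (Fin (m + 1)) ℝ)
    (hcol : ∀ i, W i 0 = 1 / Real.sqrt (m + 1)) :
    IsFaceOf {X : Matrix (Fin (m + 1)) (Fin (m + 1)) ℝ | X.PosSemidef ∧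
        X.mulVec (fun _ => (1 : ℝ)) = 0}
      {X : Matrix (Fin (m + 1)) (Fin (m + 1)) ℝ | X.PosSemidef} ∧
    {X : Matrix (Fin (m + 1)) (Fin (m + 1)) ℝ | X.PosSemidef ∧
        X.mulVec (fun _ => (1 : ℝ)) = 0}
      = {X : Matrix (Fin (m + 1)) (Fin (m + 1)) ℝ |
          ∃ A : Matrix (Fin m) (Fin m) ℝ, A.PosSemidef ∧
            X = Matrix.of (fun i (j : Fin m) => W i j.succ) * A *
                  (Matrix.of (fun i (j : Fin m) => W i j.succ)).transpose} := by
  have hu : (W · 0) = (1 / Real.sqrt (m + 1)) • fun _ => (1 : ℝ) := by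
    ext i
    simp [hcol]
  have hc : 1 / Real.sqrt (m + 1) ≠ 0 := by positivity
  have hcentred : {X : Matrix (Fin (m + 1)) (Fin (m + 1)) ℝ | X.PosSemidef ∧
      X *ᵥ (fun _ => (1 : ℝ)) = 0} = {X | X.PosSemidef ∧ X *ᵥ (W · 0) = 0} := by
    simp only [hu, mulVec_smul, smul_eq_zero, hc, false_or]
  exact ⟨isFaceOf_setOf_posSemidef_mulVec_eq_zero _,
    hcentred.trans (setOf_posSemidef_mulVec_eq_zero_eq_conj hW)⟩
end

section
/- If a ∈ R^E has all strictly positive components and the graph G = (V,E) is connected, then the Laplacian L(a) = Diag(P*(a)e) − P*(a) is positive semidefinite with kernel equal to span{e}, and the minimal face of S^n_+ containing L(a) is S_c ∩ S^n_+. -/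
/-- The minimal face of `C` containing `S`: the intersection of all faces of `C`
containing `S`. -/
def minFace {M : Type*} [AddCommGroup M] [Module ℝ M] (S C : Set M) : Set M :=
  ⋂₀ {F | IsFaceOf F C ∧ S ⊆ F}

/-!
The quadratic form of the Laplacian is `xᵀ L x = ½ ∑ᵢⱼ wᵢⱼ (xᵢ - xⱼ)²` with `w = P*(a)`, so `L` is
positive semidefinite and, `G` being connected, `xᵀ L x = 0` forces `x` to be constant.

`{X ⪰ 0 | X e = 0}` is a face of the PSD cone containing `L`. Conversely, let `X ⪰ 0` with
`X e = 0`. As `ker L = span {e}`, the matrix `L + e eᵀ` is positive definite, and positive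
definiteness is an open condition, so `L + e eᵀ - ε X ≻ 0` for some `ε ∈ (0, 1)`. Both `L` and `X`
kill `e`, so testing `L - ε X` on `e^⊥` shows `L - ε X ⪰ 0`. Then
`L = ε X + (1 - ε) · (L - ε X) / (1 - ε)` is a proper convex combination of PSD matrices, so every
face containing `L` contains `X`.
-/

open Matrix Filter Topology

lemma IsFaceOf.mem_of_sub_smul_mem {M : Type*} [AddCommGroup M] [Module ℝ M] {F C : Set M}
    (hF : IsFaceOf F C) (hC : ∀ c : ℝ, 0 < c → ∀ z ∈ C, c • z ∈ C) {x y : M} {ε : ℝ}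
    (hx : x ∈ F) (hy : y ∈ C) (hε : ε ∈ Set.Ioo 0 1) (hxy : x - ε • y ∈ C) : y ∈ F := by
  have hε1 : 0 < 1 - ε := sub_pos.2 hε.2
  refine (hF.2.2 y hy _ (hC _ (inv_pos.2 hε1) _ hxy) ε hε ?_).1
  rwa [smul_smul, mul_inv_cancel₀ hε1.ne', one_smul, add_sub_cancel]

namespace Matrix

variable {V : Type*} [Fintype V]

lemma isFaceOf_posSemidef_mulVec_eq_zero (v : V → ℝ) :
    IsFaceOf {X : Matrix V V ℝ | X.PosSemidef ∧ X *ᵥ v = 0} {X | X.PosSemidef} := by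
  refine ⟨fun X hX => hX.1, ?_, ?_⟩
  · rintro X ⟨hX, hXv⟩ Y ⟨hY, hYv⟩ s t hs ht -
    exact ⟨(hX.smul hs).add (hY.smul ht), by simp [add_mulVec, smul_mulVec, hXv, hYv]⟩
  · rintro X (hX : X.PosSemidef) Y (hY : Y.PosSemidef) t ⟨ht0, ht1⟩ ⟨-, hv⟩
    have hXq := hX.dotProduct_mulVec_nonneg v
    have hYq := hY.dotProduct_mulVec_nonneg v
    rw [star_trivial] at hXq hYq
    have hsum : t * (v ⬝ᵥ X *ᵥ v) + (1 - t) * (v ⬝ᵥ Y *ᵥ v) = 0 := by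
      simpa [add_mulVec, smul_mulVec, dotProduct_add] using congrArg (v ⬝ᵥ ·) hv
    rw [add_eq_zero_iff_of_nonneg (by positivity) (mul_nonneg (sub_pos.2 ht1).le hYq),
      mul_eq_zero, mul_eq_zero, or_iff_right ht0.ne', or_iff_right (sub_pos.2 ht1).ne'] at hsum
    rw [← star_trivial v] at hsum
    exact ⟨⟨hX, (hX.dotProduct_mulVec_zero_iff v).1 hsum.1⟩,
      ⟨hY, (hY.dotProduct_mulVec_zero_iff v).1 hsum.2⟩⟩

lemma dotProduct_smul_mulVec_smul (M : Matrix V V ℝ) (c : ℝ) (x : V → ℝ) :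
    (c • x) ⬝ᵥ M *ᵥ (c • x) = c ^ 2 * (x ⬝ᵥ M *ᵥ x) := by
  simp only [mulVec_smul, smul_dotProduct, dotProduct_smul, smul_eq_mul]
  ring

lemma PosDef.eventually_posDef_sub_smul {A B : Matrix V V ℝ} (hA : A.PosDef)
    (hB : B.IsHermitian) : ∀ᶠ t in 𝓝 (0 : ℝ), (A - t • B).PosDef := by
  have hcont : Continuous fun p : ℝ × (V → ℝ) => p.2 ⬝ᵥ (A - p.1 • B) *ᵥ p.2 := by fun_prop
  have hsphere : ∀ᶠ t in 𝓝 (0 : ℝ), ∀ u ∈ Metric.sphere (0 : V → ℝ) 1,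
      0 < u ⬝ᵥ (A - t • B) *ᵥ u := by
    refine (isCompact_sphere 0 1).eventually_forall_of_forall_eventually fun u hu =>
      continuousAt_const.eventually_lt hcont.continuousAt ?_
    have hu0 : u ≠ 0 := by rintro rfl; simp at hu
    simpa using hA.dotProduct_mulVec_pos hu0
  filter_upwards [hsphere] with t ht
  refine .of_dotProduct_mulVec_pos (hA.1.sub (hB.smul (IsSelfAdjoint.all t))) fun x hx => ?_
  have hu : ‖x‖⁻¹ • x ∈ Metric.sphere (0 : V → ℝ) 1 :=
    mem_sphere_zero_iff_norm.2 (norm_smul_inv_norm hx)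
  have hxu : x = ‖x‖ • ‖x‖⁻¹ • x := by rw [smul_inv_smul₀ (norm_ne_zero_iff.2 hx)]
  rw [star_trivial, hxu, dotProduct_smul_mulVec_smul]
  exact mul_pos (by positivity) (ht _ hu)

lemma dotProduct_mulVec_add_smul {M : Matrix V V ℝ} (hM : M.IsSymm) {v : V → ℝ}
    (hv : M *ᵥ v = 0) (x : V → ℝ) (c : ℝ) :
    (x + c • v) ⬝ᵥ M *ᵥ (x + c • v) = x ⬝ᵥ M *ᵥ x := by
  have hvM : v ᵥ* M = 0 := by rw [← mulVec_transpose, hM.eq, hv]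
  rw [mulVec_add, mulVec_smul, hv, smul_zero, add_zero, add_dotProduct, smul_dotProduct,
    dotProduct_mulVec v, hvM, zero_dotProduct, smul_zero, add_zero]

lemma dotProduct_vecMulVec_mulVec (v x : V → ℝ) : x ⬝ᵥ vecMulVec v v *ᵥ x = (v ⬝ᵥ x) ^ 2 := by
  simp [vecMulVec_mulVec, sq, dotProduct_comm x v]

lemma PosSemidef.of_add_vecMulVec {M : Matrix V V ℝ} {v : V → ℝ} (hM : M.IsSymm)
    (hv : M *ᵥ v = 0) (h : (M + vecMulVec v v).PosSemidef) : M.PosSemidef := by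
  refine .of_dotProduct_mulVec_nonneg (isHermitian_iff_isSymm.2 hM) fun x => ?_
  obtain ⟨c, hc⟩ : ∃ c : ℝ, v ⬝ᵥ (x + c • v) = 0 := by
    by_cases hv0 : v ⬝ᵥ v = 0
    · exact ⟨0, by simp [dotProduct_self_eq_zero.1 hv0]⟩
    · refine ⟨-(v ⬝ᵥ x) / (v ⬝ᵥ v), ?_⟩
      rw [dotProduct_add, dotProduct_smul, smul_eq_mul]
      field_simp
      ring
  have := h.dotProduct_mulVec_nonneg (x + c • v)
  rwa [star_trivial, add_mulVec, dotProduct_add, dotProduct_vecMulVec_mulVec, hc,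
    dotProduct_mulVec_add_smul hM hv, sq, mul_zero, add_zero] at this

lemma PosSemidef.posDef_add_vecMulVec {M : Matrix V V ℝ} {v : V → ℝ} (hM : M.PosSemidef)
    (hker : ∀ x, M *ᵥ x = 0 → ∃ c : ℝ, x = c • v) : (M + vecMulVec v v).PosDef := by
  have hvv : (vecMulVec v v).PosSemidef := by simpa using posSemidef_vecMulVec_self_star v
  refine .of_dotProduct_mulVec_pos (hM.add hvv).1 fun x hx => ?_
  have hMx := hM.dotProduct_mulVec_nonneg x
  rw [star_trivial] at hMx ⊢
  rw [add_mulVec, dotProduct_add, dotProduct_vecMulVec_mulVec]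
  refine lt_of_le_of_ne (add_nonneg hMx (sq_nonneg _)) fun h0 => hx ?_
  obtain ⟨hMx0, hvx⟩ := (add_eq_zero_iff_of_nonneg hMx (sq_nonneg _)).1 h0.symm
  rw [← star_trivial x] at hMx0
  obtain ⟨c, rfl⟩ := hker x ((hM.dotProduct_mulVec_zero_iff x).1 hMx0)
  rw [dotProduct_smul, smul_eq_mul, sq_eq_zero_iff, mul_eq_zero] at hvx
  rcases hvx with rfl | hvv
  · exact zero_smul ℝ v
  · rw [dotProduct_self_eq_zero.1 hvv, smul_zero]

theorem minFace_singleton_posSemidef_eq {L : Matrix V V ℝ} {v : V → ℝ} (hL : L.PosSemidef)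
    (hker : ∀ x, L *ᵥ x = 0 ↔ ∃ c : ℝ, x = c • v) :
    minFace {L} {X : Matrix V V ℝ | X.PosSemidef} = {X | X.PosSemidef ∧ X *ᵥ v = 0} := by
  have hLv : L *ᵥ v = 0 := (hker v).2 ⟨1, (one_smul ℝ v).symm⟩
  refine subset_antisymm (Set.sInter_subset_of_mem
    ⟨isFaceOf_posSemidef_mulVec_eq_zero v, Set.singleton_subset_iff.2 ⟨hL, hLv⟩⟩) ?_
  rintro X ⟨hX, hXv⟩ F ⟨hF, hLF⟩
  obtain ⟨ε, hε, hpd⟩ : ∃ ε ∈ Set.Ioo (0 : ℝ) 1, (L + vecMulVec v v - ε • X).PosDef :=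
    (((hL.posDef_add_vecMulVec fun x => (hker x).1).eventually_posDef_sub_smul hX.1).filter_mono
      nhdsWithin_le_nhds |>.and (Ioo_mem_nhdsGT one_pos)).exists.imp fun ε h => ⟨h.2, h.1⟩
  have hgap : (L - ε • X).PosSemidef := by
    refine .of_add_vecMulVec (v := v) ?_ ?_ ?_
    · exact isHermitian_iff_isSymm.1 (hL.1.sub (hX.1.smul (IsSelfAdjoint.all ε)))
    · rw [sub_mulVec, smul_mulVec, hLv, hXv, smul_zero, sub_zero]
    · exact sub_add_eq_add_sub L (ε • X) (vecMulVec v v) ▸ hpd.posSemidef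
  exact hF.mem_of_sub_smul_mem (fun c hc Z hZ => hZ.smul hc.le) (hLF rfl) hX hε hgap

end Matrix

section WeightedLaplacian

variable {V : Type*} [Fintype V] [DecidableEq V]

def weightedLaplacian (W : Matrix V V ℝ) : Matrix V V ℝ := diagonal (W *ᵥ 1) - W

lemma weightedLaplacian_mulVec_apply (W : Matrix V V ℝ) (x : V → ℝ) (i : V) :
    (weightedLaplacian W *ᵥ x) i = ∑ j, W i j * (x i - x j) := by
  rw [weightedLaplacian, sub_mulVec, Pi.sub_apply, mulVec_diagonal]
  simp only [mulVec, dotProduct, Pi.one_apply, mul_one, Finset.sum_mul, mul_sub,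
    Finset.sum_sub_distrib]

variable {W : Matrix V V ℝ}

lemma weightedLaplacian_isSymm (hW : W.IsSymm) : (weightedLaplacian W).IsSymm :=
  (isSymm_diagonal _).sub hW

lemma dotProduct_weightedLaplacian_mulVec (hW : W.IsSymm) (x : V → ℝ) :
    x ⬝ᵥ weightedLaplacian W *ᵥ x = (∑ i, ∑ j, W i j * (x i - x j) ^ 2) / 2 := by
  have hform : x ⬝ᵥ weightedLaplacian W *ᵥ x = ∑ i, ∑ j, W i j * (x i * (x i - x j)) := by
    simp only [dotProduct, weightedLaplacian_mulVec_apply, Finset.mul_sum]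
    exact Finset.sum_congr rfl fun i _ => Finset.sum_congr rfl fun j _ => by ring
  have hswap : ∑ i, ∑ j, W i j * (x i * (x i - x j)) =
      ∑ i, ∑ j, W i j * (x j * (x j - x i)) := by
    rw [Finset.sum_comm]
    simp_rw [hW.apply]
  rw [eq_div_iff two_ne_zero, mul_two, hform]
  nth_rewrite 2 [hswap]
  rw [← Finset.sum_add_distrib]
  refine Finset.sum_congr rfl fun i _ => ?_
  rw [← Finset.sum_add_distrib]
  exact Finset.sum_congr rfl fun j _ => by ring

lemma posSemidef_weightedLaplacian (hW : W.IsSymm) (hW0 : ∀ i j, 0 ≤ W i j) :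
    (weightedLaplacian W).PosSemidef := by
  refine .of_dotProduct_mulVec_nonneg (isHermitian_iff_isSymm.2 (weightedLaplacian_isSymm hW))
    fun x => ?_
  rw [star_trivial, dotProduct_weightedLaplacian_mulVec hW]
  exact div_nonneg (Finset.sum_nonneg fun i _ => Finset.sum_nonneg fun j _ =>
    mul_nonneg (hW0 i j) (sq_nonneg _)) zero_le_two

lemma weightedLaplacian_mulVec_eq_zero_iff (hW : W.IsSymm) (hW0 : ∀ i j, 0 ≤ W i j)
    {x : V → ℝ} : weightedLaplacian W *ᵥ x = 0 ↔ ∀ i j, W i j ≠ 0 → x i = x j := by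
  have hterm : ∀ i j, 0 ≤ W i j * (x i - x j) ^ 2 := fun i j => mul_nonneg (hW0 i j) (sq_nonneg _)
  rw [← (posSemidef_weightedLaplacian hW hW0).dotProduct_mulVec_zero_iff, star_trivial,
    dotProduct_weightedLaplacian_mulVec hW, div_eq_zero_iff, or_iff_left two_ne_zero,
    Finset.sum_eq_zero_iff_of_nonneg fun i _ => Finset.sum_nonneg fun j _ => hterm i j]
  simp only [Finset.sum_eq_zero_iff_of_nonneg fun j _ => hterm _ j, Finset.mem_univ,
    true_implies, mul_eq_zero, pow_eq_zero_iff two_ne_zero, sub_eq_zero, or_iff_not_imp_left]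

end WeightedLaplacian

namespace SimpleGraph

variable {V : Type*} {G : SimpleGraph V}

lemma Connected.exists_eq_const_of_forall_adj {α : Type*} (hG : G.Connected) {f : V → α}
    (hf : ∀ i j, G.Adj i j → f i = f j) : ∃ c, f = fun _ => c := by
  obtain ⟨i₀⟩ := hG.nonempty
  refine ⟨f i₀, funext fun j => ?_⟩
  obtain ⟨p⟩ := hG.preconnected j i₀
  induction p with
  | nil => rfl
  | cons h _ ih => exact (hf _ _ h).trans ih

/-- `P*(a)` in the paper's notation. -/
def weightMatrix (G : SimpleGraph V) [DecidableRel G.Adj] (a : V → V → ℝ) : Matrix V V ℝ :=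
  of fun i j => if G.Adj i j then a i j else 0

variable [DecidableRel G.Adj] {a : V → V → ℝ}

lemma weightMatrix_isSymm (ha : ∀ i j, a i j = a j i) : (G.weightMatrix a).IsSymm := by
  ext i j
  simp [weightMatrix, G.adj_comm, ha]

lemma weightMatrix_nonneg (ha : ∀ i j, G.Adj i j → 0 < a i j) (i j : V) :
    0 ≤ G.weightMatrix a i j := by
  by_cases h : G.Adj i j
  · simpa [weightMatrix, h] using (ha i j h).le
  · simp [weightMatrix, h]

variable [Fintype V] [DecidableEq V]

lemma weightedLaplacian_weightMatrix :
    weightedLaplacian (G.weightMatrix a) = of fun i j =>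
      if i = j then ∑ k, if G.Adj i k then a i k else 0
      else if G.Adj i j then -(a i j) else 0 := by
  ext i j
  by_cases h : i = j
  · subst h
    simp [weightedLaplacian, weightMatrix, mulVec, dotProduct]
  · rw [weightedLaplacian, Matrix.sub_apply, diagonal_apply_ne _ h]
    simp only [weightMatrix, of_apply, if_neg h]
    split_ifs <;> simp

lemma weightedLaplacian_weightMatrix_mulVec_eq_zero_iff (hG : G.Connected)
    (hsym : ∀ i j, a i j = a j i) (hpos : ∀ i j, G.Adj i j → 0 < a i j) {x : V → ℝ} :
    weightedLaplacian (G.weightMatrix a) *ᵥ x = 0 ↔ ∃ c, x = fun _ => c := by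
  rw [weightedLaplacian_mulVec_eq_zero_iff (weightMatrix_isSymm hsym) (weightMatrix_nonneg hpos)]
  refine ⟨fun h => hG.exists_eq_const_of_forall_adj fun i j hij => h i j ?_, ?_⟩
  · simpa [weightMatrix, hij] using (hpos i j hij).ne'
  · rintro ⟨c, rfl⟩ _ _ _
    rfl

end SimpleGraph

/-- For a connected graph `G` and strictly positive edge weights `a`, the Laplacian
`L(a) = Diag(P*(a) e) - P*(a)` is positive semidefinite, its kernel is the span of the
all-ones vector, and the minimal face of the PSD cone containing it is `S_c ∩ S^n₊`. -/
theorem laplacian_minimal_face {n : ℕ} (G : SimpleGraph (Fin n)) [DecidableRel G.Adj]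
    (hconn : G.Connected) (a : Fin n → Fin n → ℝ)
    (hsym : ∀ i j, a i j = a j i) (hpos : ∀ i j, G.Adj i j → 0 < a i j) :
    (Matrix.of fun i j : Fin n =>
        if i = j then ∑ k, if G.Adj i k then a i k else 0
        else if G.Adj i j then -(a i j) else 0).PosSemidef ∧
    {x : Fin n → ℝ | (Matrix.of fun i j : Fin n =>
        if i = j then ∑ k, if G.Adj i k then a i k else 0
        else if G.Adj i j then -(a i j) else 0).mulVec x = 0}
      = {x : Fin n → ℝ | ∃ c : ℝ, x = fun _ => c} ∧
    minFace {(Matrix.of fun i j : Fin n =>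
        if i = j then ∑ k, if G.Adj i k then a i k else 0
        else if G.Adj i j then -(a i j) else 0)}
        {X : Matrix (Fin n) (Fin n) ℝ | X.PosSemidef}
      = {X : Matrix (Fin n) (Fin n) ℝ | X.PosSemidef ∧
          X.mulVec (fun _ => (1 : ℝ)) = 0} := by
  rw [← SimpleGraph.weightedLaplacian_weightMatrix]
  have hker (x : Fin n → ℝ) :
      weightedLaplacian (G.weightMatrix a) *ᵥ x = 0 ↔ ∃ c : ℝ, x = fun _ => c :=
    SimpleGraph.weightedLaplacian_weightMatrix_mulVec_eq_zero_iff hconn hsym hpos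
  have hpsd := posSemidef_weightedLaplacian (SimpleGraph.weightMatrix_isSymm hsym)
    (SimpleGraph.weightMatrix_nonneg hpos)
  refine ⟨hpsd, Set.ext hker, minFace_singleton_posSemidef_eq hpsd fun x => ?_⟩
  rw [hker]
  simp [funext_iff]
end

section
/- Let M : E → Y be linear between Euclidean spaces, C ⊆ E a proper (closed, full-dimensional) convex cone, and F = {X ∈ C : M(X) = b} nonempty. A vector v ∈ Y exposes a proper face of M(C) containing b if and only if v satisfies: M*v ∈ C*, M*v ≠ 0, and ⟨v,b⟩ = 0. -/
/-!
The adjoint identity `⟪M* v, x⟫ = ⟪v, M x⟫` turns `v ∈ (M C)*` into `M* v ∈ C*`, and the face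
`M(C) ∩ v^⊥` is all of `M(C)` exactly when `M* v` vanishes on `C`. Since `C` has an interior
point `z`, a nonzero `u ∈ C*` is strictly positive at `z`: otherwise `⟪u, ·⟫` would have a local
minimum at `z`, forcing its derivative `u` to vanish.
-/

/-- The nonnegative polar cone of a set `C`. -/
def polarCone {M : Type*} [NormedAddCommGroup M] [InnerProductSpace ℝ M]
    (C : Set M) : Set M :=
  {y | ∀ x ∈ C, 0 ≤ (inner ℝ y x : ℝ)}

open scoped RealInnerProductSpace

section PolarCone

variable {E Y : Type*} [NormedAddCommGroup E] [InnerProductSpace ℝ E]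
  [NormedAddCommGroup Y] [InnerProductSpace ℝ Y]

theorem mem_polarCone_image_iff [FiniteDimensional ℝ E] [FiniteDimensional ℝ Y]
    (M : E →ₗ[ℝ] Y) (C : Set E) (v : Y) :
    v ∈ polarCone (M '' C) ↔ LinearMap.adjoint M v ∈ polarCone C := by
  simp only [polarCone, Set.mem_ofPred_eq, Set.forall_mem_image, LinearMap.adjoint_inner_left]

theorem image_inter_inner_eq_zero_ne_iff [FiniteDimensional ℝ E] [FiniteDimensional ℝ Y]
    (M : E →ₗ[ℝ] Y) (C : Set E) (v : Y) :
    (M '' C) ∩ {y | ⟪v, y⟫ = 0} ≠ M '' C ↔ ∃ x ∈ C, ⟪LinearMap.adjoint M v, x⟫ ≠ 0 := by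
  simp [Set.inter_eq_left, Set.subset_def, LinearMap.adjoint_inner_left]

theorem inner_pos_of_mem_polarCone_of_mem_interior {C : Set E} {u z : E}
    (hu : u ∈ polarCone C) (hu0 : u ≠ 0) (hz : z ∈ interior C) : 0 < ⟪u, z⟫ := by
  refine (hu z (interior_subset hz)).lt_of_ne fun hzero => hu0 ?_
  have hmin : IsLocalMin (fun x => ⟪u, x⟫) z :=
    Filter.mem_of_superset (mem_interior_iff_mem_nhds.mp hz) fun x hx => by
      simpa [← hzero] using hu x hx
  have hderiv : innerSL ℝ u = 0 := hmin.hasFDerivAt_eq_zero (innerSL ℝ u).hasFDerivAt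
  simpa using congrArg (fun f => f u) hderiv

end PolarCone

theorem exposes_iff_auxiliary_system_general
    {E Y : Type*} [NormedAddCommGroup E] [InnerProductSpace ℝ E]
    [FiniteDimensional ℝ E] [NormedAddCommGroup Y] [InnerProductSpace ℝ Y]
    [FiniteDimensional ℝ Y]
    (M : E →ₗ[ℝ] Y) (C : Set E)
    (hint : (interior C).Nonempty)
    (b : Y) (hF : {X ∈ C | M X = b}.Nonempty) (v : Y) :
    (v ∈ polarCone (M '' C) ∧
        (M '' C) ∩ {y | (inner ℝ v y : ℝ) = 0} ≠ M '' C ∧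
        b ∈ (M '' C) ∩ {y | (inner ℝ v y : ℝ) = 0})
      ↔ (LinearMap.adjoint M v ∈ polarCone C ∧ LinearMap.adjoint M v ≠ 0 ∧
          (inner ℝ v b : ℝ) = 0) := by
  rw [mem_polarCone_image_iff, image_inter_inner_eq_zero_ne_iff]
  constructor
  · rintro ⟨hpolar, ⟨x, -, hx⟩, -, hb⟩
    exact ⟨hpolar, fun h0 => hx (by simp [h0]), hb⟩
  · rintro ⟨hpolar, hne, hb⟩
    obtain ⟨z, hz⟩ := hint
    obtain ⟨x₀, hx₀C, hx₀b⟩ := hF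
    exact ⟨hpolar, ⟨z, interior_subset hz,
      (inner_pos_of_mem_polarCone_of_mem_interior hpolar hne hz).ne'⟩, ⟨x₀, hx₀C, hx₀b⟩, hb⟩

/-- Let `M : E → Y` be linear between Euclidean spaces, `C ⊆ E` a proper (closed,
full-dimensional) convex cone, and `F = {X ∈ C : M X = b}` nonempty.  A vector `v`
exposes a proper face of `M(C)` containing `b` if, and only if, `v` satisfies the
auxiliary system `M* v ∈ C*`, `M* v ≠ 0`, `⟨v, b⟩ = 0`. -/
theorem exposes_iff_auxiliary_system
    {E Y : Type*} [NormedAddCommGroup E] [InnerProductSpace ℝ E]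
    [FiniteDimensional ℝ E] [NormedAddCommGroup Y] [InnerProductSpace ℝ Y]
    [FiniteDimensional ℝ Y]
    (M : E →ₗ[ℝ] Y) (C : Set E)
    (hconv : Convex ℝ C) (hcone : ∀ x ∈ C, ∀ t : ℝ, 0 ≤ t → t • x ∈ C)
    (hclosed : IsClosed C) (hint : (interior C).Nonempty)
    (b : Y) (hF : {X ∈ C | M X = b}.Nonempty) (v : Y) :
    (v ∈ polarCone (M '' C) ∧
        (M '' C) ∩ {y | (inner ℝ v y : ℝ) = 0} ≠ M '' C ∧
        b ∈ (M '' C) ∩ {y | (inner ℝ v y : ℝ) = 0})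
      ↔ (LinearMap.adjoint M v ∈ polarCone C ∧ LinearMap.adjoint M v ≠ 0 ∧
          (inner ℝ v b : ℝ) = 0) :=
  exposes_iff_auxiliary_system_general M C hint b hF v
end

section
/- Let M : E → Y be linear, C ⊆ E a proper convex cone, b ∈ Y with F = {X ∈ C : M(X) = b} nonempty, and let N = face(b, M(C)) be the minimal face of M(C) containing b. Then C ∩ M^{-1}(N) = face(F, C), the minimal face of C containing F. -/
/-!
Write `D = M(C)` and `N = face(b, D)`. For convex `D`, the face `N` consists of the points `y ∈ D`
such that the segment from `y` to `b` can be prolonged beyond `b` inside `D`. So if `x ∈ C` and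
`M x ∈ N`, then `b = M w` for some `w ∈ C` lying strictly between `x` and another point of `C`;
as `w ∈ F`, every face of `C` containing `F` contains `x`. Conversely `C ∩ M⁻¹(N)` is a face of
`C` containing `F`, hence contains `face(F, C)`.
-/

open Set

section

variable {V : Type*} [AddCommGroup V] [Module ℝ V]

lemma IsFaceOf.mem_of_mem_openSegment {F C : Set V} (hF : IsFaceOf F C) {x y w : V}
    (hx : x ∈ C) (hy : y ∈ C) (hw : w ∈ F) (hwxy : w ∈ openSegment ℝ x y) : x ∈ F ∧ y ∈ F := by
  obtain ⟨s, t, hs, ht, hst, rfl⟩ := hwxy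
  obtain rfl : t = 1 - s := by linarith
  exact hF.2.2 x hx y hy s ⟨hs, by linarith⟩ hw

lemma isFaceOf_self {C : Set V} (hC : Convex ℝ C) : IsFaceOf C C :=
  ⟨subset_rfl, hC, fun _ hx _ hy _ _ _ => ⟨hx, hy⟩⟩

lemma subset_minFace (S C : Set V) : S ⊆ minFace S C :=
  fun _ hx => mem_sInter.2 fun _ hK => hK.2 hx

lemma minFace_subset {S C F : Set V} (hF : IsFaceOf F C) (hSF : S ⊆ F) : minFace S C ⊆ F :=
  sInter_subset_of_mem ⟨hF, hSF⟩

lemma isFaceOf_minFace {S C : Set V} (hC : Convex ℝ C) (hS : S ⊆ C) :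
    IsFaceOf (minFace S C) C := by
  refine ⟨minFace_subset (isFaceOf_self hC) hS, convex_sInter fun K hK => hK.1.2.1, ?_⟩
  intro x hx y hy t ht hmem
  have h := fun K (hK : K ∈ {F | IsFaceOf F C ∧ S ⊆ F}) =>
    hK.1.2.2 x hx y hy t ht (mem_sInter.1 hmem K hK)
  exact ⟨mem_sInter.2 fun K hK => (h K hK).1, mem_sInter.2 fun K hK => (h K hK).2⟩

lemma left_mem_minFace_of_mem_openSegment {S C : Set V} {x y w : V} (hx : x ∈ C) (hy : y ∈ C)
    (hw : w ∈ S) (hwxy : w ∈ openSegment ℝ x y) : x ∈ minFace S C :=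
  mem_sInter.2 fun _ hK => (hK.1.mem_of_mem_openSegment hx hy (hK.2 hw) hwxy).1

def prolongableThrough (D : Set V) (b : V) : Set V :=
  {x ∈ D | ∃ ε > (0 : ℝ), b + ε • (b - x) ∈ D}

lemma mem_openSegment_prolongation (x b : V) {ε : ℝ} (hε : 0 < ε) :
    b ∈ openSegment ℝ x (b + ε • (b - x)) := by
  refine ⟨ε / (1 + ε), 1 / (1 + ε), by positivity, by positivity, by field_simp; ring, ?_⟩
  match_scalars
  · ring
  · field_simp

lemma self_mem_prolongableThrough {D : Set V} {b : V} (hb : b ∈ D) :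
    b ∈ prolongableThrough D b :=
  ⟨hb, 1, one_pos, by simpa using hb⟩

lemma Convex.prolongation_mem_of_le {D : Set V} (hD : Convex ℝ D) {x b : V} (hb : b ∈ D)
    {ε δ : ℝ} (hε : 0 < ε) (hbε : b + ε • (b - x) ∈ D) (hδ : 0 ≤ δ) (hδε : δ ≤ ε) :
    b + δ • (b - x) ∈ D := by
  have h := hD.add_smul_mem hb hbε ⟨div_nonneg hδ hε.le, (div_le_one hε).2 hδε⟩
  rwa [smul_smul, div_mul_cancel₀ δ hε.ne'] at h

lemma Convex.convex_prolongableThrough {D : Set V} (hD : Convex ℝ D) {b : V} (hb : b ∈ D) :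
    Convex ℝ (prolongableThrough D b) := by
  rintro x₁ ⟨hx₁, ε₁, hε₁, h₁⟩ x₂ ⟨hx₂, ε₂, hε₂, h₂⟩ s t hs ht hst
  obtain rfl : t = 1 - s := by linarith
  have hε : 0 < min ε₁ ε₂ := lt_min hε₁ hε₂
  have h₁' := hD.prolongation_mem_of_le hb hε₁ h₁ hε.le (min_le_left _ _)
  have h₂' := hD.prolongation_mem_of_le hb hε₂ h₂ hε.le (min_le_right _ _)
  refine ⟨hD hx₁ hx₂ hs ht hst, min ε₁ ε₂, hε, ?_⟩
  convert hD h₁' h₂' hs ht hst using 1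
  module

/-- If `b + ε • (b - w) ∈ D` for `w = s • x + t • y`, the point `b + δ • (b - x)` with
`δ = ε s / (1 + ε t)` is the convex combination of `b + ε • (b - w)` and `y` in which `y` cancels. -/
lemma Convex.mem_prolongableThrough_of_combo {D : Set V} (hD : Convex ℝ D) {b x y : V}
    (hx : x ∈ D) (hy : y ∈ D) {s t ε : ℝ} (hs : 0 < s) (ht : 0 ≤ t) (hst : s + t = 1)
    (hε : 0 < ε) (hw : b + ε • (b - (s • x + t • y)) ∈ D) : x ∈ prolongableThrough D b := by
  obtain rfl : t = 1 - s := by linarith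
  have hden : 0 < 1 + ε * (1 - s) := by positivity
  refine ⟨hx, ε * s / (1 + ε * (1 - s)), by positivity, ?_⟩
  convert hD hw hy (a := 1 / (1 + ε * (1 - s))) (b := ε * (1 - s) / (1 + ε * (1 - s)))
    (by positivity) (by positivity) (by field_simp) using 1
  match_scalars <;> field_simp <;> ring

lemma Convex.isFaceOf_prolongableThrough {D : Set V} (hD : Convex ℝ D) {b : V} (hb : b ∈ D) :
    IsFaceOf (prolongableThrough D b) D := by
  refine ⟨fun x hx => hx.1, hD.convex_prolongableThrough hb, ?_⟩
  rintro x hx y hy t ⟨ht₀, ht₁⟩ ⟨-, ε, hε, hw⟩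
  refine ⟨hD.mem_prolongableThrough_of_combo hx hy ht₀ (by linarith) (by ring) hε hw,
    hD.mem_prolongableThrough_of_combo (s := 1 - t) (t := t) hy hx (by linarith) ht₀.le (by ring)
      hε (by rwa [add_comm ((1 - t) • y)])⟩

lemma Convex.minFace_singleton_subset_prolongableThrough {D : Set V} (hD : Convex ℝ D) {b : V}
    (hb : b ∈ D) : minFace {b} D ⊆ prolongableThrough D b :=
  minFace_subset (hD.isFaceOf_prolongableThrough hb)
    (singleton_subset_iff.2 (self_mem_prolongableThrough hb))

end

lemma IsFaceOf.inter_preimage {E Y : Type*} [AddCommGroup E] [Module ℝ E] [AddCommGroup Y]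
    [Module ℝ Y] {C : Set E} (hC : Convex ℝ C) (M : E →ₗ[ℝ] Y) {N : Set Y}
    (hN : IsFaceOf N (M '' C)) : IsFaceOf (C ∩ M ⁻¹' N) C := by
  refine ⟨inter_subset_left, hC.inter (hN.2.1.linear_preimage M), ?_⟩
  intro x hx y hy t ht hmem
  have h := hN.2.2 (M x) (mem_image_of_mem M hx) (M y) (mem_image_of_mem M hy) t ht
    (by simpa only [mem_preimage, map_add, map_smul] using hmem.2)
  exact ⟨⟨hx, h.1⟩, ⟨hy, h.2⟩⟩

theorem preimage_minimal_face_general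
    {E Y : Type*} [NormedAddCommGroup E] [InnerProductSpace ℝ E]
    [NormedAddCommGroup Y] [InnerProductSpace ℝ Y]
    (M : E →ₗ[ℝ] Y) (C : Set E)
    (hconv : Convex ℝ C)
    (b : Y) (hF : {X ∈ C | M X = b}.Nonempty) :
    C ∩ M ⁻¹' (minFace {b} (M '' C)) = minFace {X ∈ C | M X = b} C := by
  obtain ⟨X₀, hX₀C, rfl⟩ := hF
  have hD : Convex ℝ (M '' C) := hconv.linear_image M
  have hb : M X₀ ∈ M '' C := mem_image_of_mem M hX₀C
  apply Subset.antisymm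
  · rintro x ⟨hx, hxN⟩
    obtain ⟨-, ε, hε, Z, hZ, hMZ⟩ := hD.minFace_singleton_subset_prolongableThrough hb hxN
    have hseg := mem_openSegment_prolongation (M x) (M X₀) hε
    rw [← hMZ, ← M.coe_toAffineMap, ← image_openSegment] at hseg
    obtain ⟨w, hw, hMw⟩ := hseg
    exact left_mem_minFace_of_mem_openSegment hx hZ ⟨hconv.openSegment_subset hx hZ hw, hMw⟩ hw
  · refine minFace_subset ((isFaceOf_minFace hD (singleton_subset_iff.2 hb)).inter_preimage hconv M)
      fun X hX => ⟨hX.1, ?_⟩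
    rw [mem_preimage, hX.2]
    exact subset_minFace _ _ rfl

/-- Let `M : E → Y` be linear, `C ⊆ E` a proper convex cone, `b ∈ Y` with
`F = {X ∈ C : M X = b}` nonempty, and let `N = face(b, M(C))`.  Then
`C ∩ M⁻¹(N) = face(F, C)`. -/
theorem preimage_minimal_face
    {E Y : Type*} [NormedAddCommGroup E] [InnerProductSpace ℝ E]
    [FiniteDimensional ℝ E] [NormedAddCommGroup Y] [InnerProductSpace ℝ Y]
    [FiniteDimensional ℝ Y]
    (M : E →ₗ[ℝ] Y) (C : Set E)
    (hconv : Convex ℝ C) (hcone : ∀ x ∈ C, ∀ t : ℝ, 0 ≤ t → t • x ∈ C)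
    (hclosed : IsClosed C) (hint : (interior C).Nonempty)
    (b : Y) (hF : {X ∈ C | M X = b}.Nonempty) :
    C ∩ M ⁻¹' (minFace {b} (M '' C)) = minFace {X ∈ C | M X = b} C :=
  preimage_minimal_face_general M C hconv b hF
end

section
/- Let M : E → Y be linear, C ⊆ E a proper convex cone, b ∈ Y with F = {X ∈ C : M(X) = b} nonempty, and N = face(b, M(C)). Then for any v ∈ Y: v exposes N (i.e., v ∈ (M(C))* and N = M(C) ∩ v^⊥) if and only if M*v exposes face(F, C) (i.e., M*v ∈ C* and face(F,C) = C ∩ (M*v)^⊥). -/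
open Set

section FaceHull

variable {V W : Type*} [AddCommGroup V] [Module ℝ V] [AddCommGroup W] [Module ℝ W]

def faceHull (F C : Set V) : Set V :=
  {y ∈ C | ∃ z ∈ C, ∃ s ∈ Ioo (0 : ℝ) 1, s • y + (1 - s) • z ∈ F}

variable {F C : Set V}

lemma minFace_subset_s11 {S : Set V} (hC : Convex ℝ C) (hSC : S ⊆ C) : minFace S C ⊆ C :=
  sInter_subset_of_mem (show C ∈ {G | IsFaceOf G C ∧ S ⊆ G} from
    ⟨⟨subset_rfl, hC, fun _ hx _ hy _ _ _ => ⟨hx, hy⟩⟩, hSC⟩)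

lemma faceHull_subset : faceHull F C ⊆ C := fun _ hy => hy.1

lemma subset_faceHull (hFC : F ⊆ C) : F ⊆ faceHull F C := by
  intro x hx
  refine ⟨hFC hx, x, hFC hx, 1 / 2, ⟨by norm_num, by norm_num⟩, ?_⟩
  convert hx using 1
  module

lemma faceHull_subset_of_isFaceOf {G : Set V} (hG : IsFaceOf G C) (hFG : F ⊆ G) :
    faceHull F C ⊆ G := by
  rintro y ⟨hy, z, hz, s, hs, hF⟩
  exact (hG.2.2 y hy z hz s hs (hFG hF)).1

lemma Convex.faceHull (hC : Convex ℝ C) (hF : Convex ℝ F) : Convex ℝ (faceHull F C) := by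
  intro y₁ hy₁ y₂ hy₂ a b ha hb hab
  obtain rfl : b = 1 - a := by linarith
  rcases ha.eq_or_lt with rfl | ha
  · simpa using hy₂
  rcases hb.eq_or_lt with h | hb
  · obtain rfl : a = 1 := by linarith
    simpa using hy₁
  obtain ⟨hy₁C, z₁, hz₁, s₁, ⟨hs₁0, hs₁1⟩, hp₁⟩ := hy₁
  obtain ⟨hy₂C, z₂, hz₂, s₂, ⟨hs₂0, hs₂1⟩, hp₂⟩ := hy₂
  -- Weigh the two witnesses `pᵢ = sᵢ yᵢ + (1 - sᵢ) zᵢ ∈ F` by `a s₂ : (1 - a) s₁`; the result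
  -- lies on an open segment from `a y₁ + (1 - a) y₂` to a point `z` of `[z₁, z₂]`.
  set d := a * s₂ + (1 - a) * s₁ with hd_def
  have hd : 0 < d := by positivity
  have hm : 0 < d - s₁ * s₂ := by
    nlinarith [mul_pos ha (mul_pos hs₂0 (sub_pos.2 hs₁1)),
      mul_pos hb (mul_pos hs₁0 (sub_pos.2 hs₂1))]
  set z := (a * s₂ * (1 - s₁) / (d - s₁ * s₂)) • z₁
    + ((1 - a) * s₁ * (1 - s₂) / (d - s₁ * s₂)) • z₂
  have hz : z ∈ C := hC hz₁ hz₂ (by positivity) (by positivity)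
    (by rw [← add_div, div_eq_one_iff_eq hm.ne', hd_def]; ring)
  have hp : a * s₂ / d + (1 - a) * s₁ / d = 1 := by rw [← add_div, div_self hd.ne']
  refine ⟨hC hy₁C hy₂C ha.le hb.le (by ring), z, hz, s₁ * s₂ / d,
    ⟨by positivity, by rw [div_lt_one hd]; nlinarith⟩, ?_⟩
  convert hF hp₁ hp₂ (by positivity) (by positivity) hp using 1
  match_scalars <;> field_simp

lemma mem_faceHull_of_smul_add_mem (hC : Convex ℝ C) {x y : V} (hx : x ∈ C) (hy : y ∈ C)
    {t : ℝ} (ht : t ∈ Ioo (0 : ℝ) 1) (h : t • x + (1 - t) • y ∈ faceHull F C) :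
    x ∈ faceHull F C := by
  obtain ⟨-, z, hz, s, ⟨hs0, hs1⟩, hp⟩ := h
  obtain ⟨ht0, ht1⟩ := ht
  have hst : 0 < 1 - s * t := by nlinarith
  refine ⟨hx, (s * (1 - t) / (1 - s * t)) • y + ((1 - s) / (1 - s * t)) • z,
    hC hy hz (div_nonneg (by nlinarith) hst.le) (div_nonneg (by nlinarith) hst.le)
      (by field_simp; ring), s * t, ⟨by positivity, by nlinarith⟩, ?_⟩
  convert hp using 1
  match_scalars <;> field_simp

lemma isFaceOf_faceHull (hC : Convex ℝ C) (hF : Convex ℝ F) : IsFaceOf (faceHull F C) C := by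
  refine ⟨faceHull_subset, hC.faceHull hF, fun x hx y hy t ht h => ⟨?_, ?_⟩⟩
  · exact mem_faceHull_of_smul_add_mem hC hx hy ht h
  · refine mem_faceHull_of_smul_add_mem hC hy hx (t := 1 - t)
      ⟨by linarith [ht.2], by linarith [ht.1]⟩ ?_
    convert h using 1
    module

lemma minFace_eq_faceHull (hC : Convex ℝ C) (hFC : F ⊆ C) (hF : Convex ℝ F) :
    minFace F C = faceHull F C :=
  (sInter_subset_of_mem (show faceHull F C ∈ {G | IsFaceOf G C ∧ F ⊆ G} from
    ⟨isFaceOf_faceHull hC hF, subset_faceHull hFC⟩)).antisymm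
    fun _ hy _ ⟨hG, hFG⟩ => faceHull_subset_of_isFaceOf hG hFG hy

lemma faceHull_fiber_eq_inter_preimage (M : V →ₗ[ℝ] W) (hC : Convex ℝ C) (b : W) :
    faceHull {x ∈ C | M x = b} C = C ∩ M ⁻¹' faceHull {b} (M '' C) := by
  ext x
  constructor
  · rintro ⟨hx, z, hz, s, hs, -, hb⟩
    refine ⟨hx, show M x ∈ faceHull {b} (M '' C) from ?_⟩
    exact ⟨mem_image_of_mem M hx, M z, mem_image_of_mem M hz, s, hs, by simpa using hb⟩
  · rintro ⟨hx, -, _, ⟨z, hz, rfl⟩, s, hs, hb⟩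
    exact ⟨hx, z, hz, s, hs, hC hx hz hs.1.le (by linarith [hs.2]) (by ring), by simpa using hb⟩

lemma minFace_fiber_eq_inter_preimage (M : V →ₗ[ℝ] W) (hC : Convex ℝ C) {b : W}
    (hb : b ∈ M '' C) :
    minFace {x ∈ C | M x = b} C = C ∩ M ⁻¹' minFace {b} (M '' C) := by
  have hfiber : Convex ℝ {x ∈ C | M x = b} := hC.inter (convex_singleton b |>.linear_preimage M)
  rw [minFace_eq_faceHull hC (fun _ hx => hx.1) hfiber,
    minFace_eq_faceHull (hC.linear_image M) (singleton_subset_iff.2 hb) (convex_singleton b),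
    faceHull_fiber_eq_inter_preimage M hC]

end FaceHull

lemma eq_image_inter_iff {α β : Type*} (f : α → β) {s : Set α} {A B : Set β}
    (hA : A ⊆ f '' s) : A = f '' s ∩ B ↔ s ∩ f ⁻¹' A = s ∩ f ⁻¹' B := by
  constructor
  · rintro rfl
    rw [preimage_inter, ← inter_assoc, inter_eq_left.2 (subset_preimage_image f s)]
  · intro h
    rw [← inter_eq_right.2 hA, ← image_inter_preimage, h, image_inter_preimage]

lemma adjoint_mem_polarCone_iff {E Y : Type*} [NormedAddCommGroup E] [InnerProductSpace ℝ E]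
    [FiniteDimensional ℝ E] [NormedAddCommGroup Y] [InnerProductSpace ℝ Y]
    [FiniteDimensional ℝ Y] (M : E →ₗ[ℝ] Y) (C : Set E) (v : Y) :
    LinearMap.adjoint M v ∈ polarCone C ↔ v ∈ polarCone (M '' C) := by
  simp [polarCone, LinearMap.adjoint_inner_left]

theorem exposes_minimal_face_iff_general
    {E Y : Type*} [NormedAddCommGroup E] [InnerProductSpace ℝ E]
    [FiniteDimensional ℝ E] [NormedAddCommGroup Y] [InnerProductSpace ℝ Y]
    [FiniteDimensional ℝ Y]
    (M : E →ₗ[ℝ] Y) (C : Set E)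
    (hconv : Convex ℝ C)
    (b : Y) (hF : {X ∈ C | M X = b}.Nonempty) (v : Y) :
    (v ∈ polarCone (M '' C) ∧
        minFace {b} (M '' C) = (M '' C) ∩ {y | (inner ℝ v y : ℝ) = 0})
      ↔ (LinearMap.adjoint M v ∈ polarCone C ∧
          minFace {X ∈ C | M X = b} C
            = C ∩ {x | (inner ℝ (LinearMap.adjoint M v) x : ℝ) = 0}) := by
  obtain ⟨x₀, hx₀, rfl⟩ := hF
  have hb : M x₀ ∈ M '' C := mem_image_of_mem M hx₀
  have hN : minFace {M x₀} (M '' C) ⊆ M '' C :=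
    minFace_subset_s11 (hconv.linear_image M) (singleton_subset_iff.2 hb)
  simp_rw [adjoint_mem_polarCone_iff, minFace_fiber_eq_inter_preimage M hconv hb,
    LinearMap.adjoint_inner_left]
  exact and_congr_right' (eq_image_inter_iff M hN)

/-- Let `M : E → Y` be linear, `C ⊆ E` a proper convex cone, `b ∈ Y` with
`F = {X ∈ C : M X = b}` nonempty, and `N = face(b, M(C))`.  For any `v ∈ Y`:
`v` exposes `N` if and only if `M* v` exposes `face(F, C)`. -/
theorem exposes_minimal_face_iff
    {E Y : Type*} [NormedAddCommGroup E] [InnerProductSpace ℝ E]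
    [FiniteDimensional ℝ E] [NormedAddCommGroup Y] [InnerProductSpace ℝ Y]
    [FiniteDimensional ℝ Y]
    (M : E →ₗ[ℝ] Y) (C : Set E)
    (hconv : Convex ℝ C) (hcone : ∀ x ∈ C, ∀ t : ℝ, 0 ≤ t → t • x ∈ C)
    (hclosed : IsClosed C) (hint : (interior C).Nonempty)
    (b : Y) (hF : {X ∈ C | M X = b}.Nonempty) (v : Y) :
    (v ∈ polarCone (M '' C) ∧
        minFace {b} (M '' C) = (M '' C) ∩ {y | (inner ℝ v y : ℝ) = 0})
      ↔ (LinearMap.adjoint M v ∈ polarCone C ∧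
          minFace {X ∈ C | M X = b} C
            = C ∩ {x | (inner ℝ (LinearMap.adjoint M v) x : ℝ) = 0}) :=
  exposes_minimal_face_iff_general M C hconv b hF v
end

section
/- Let L = {1,...,r} and suppose X_L ∈ S^r_+ is a maximum-rank PSD completion of the restriction a_{E_L} of a partial matrix a, and X = [[A, B],[B^T, C]] is any PSD completion of a. Then for all sufficiently large μ, the matrix X_μ = [[X_L, B],[B^T, C + μI]] is a PSD completion of a of maximal rank, namely rank X_L + (n − r). -/
/-!
Write `X = [[A, B], [Bᴴ, C]]`. The midpoint `(X_L + A) / 2` is again a PSD completion of `a`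
on `L`, so maximality of `X_L` bounds its rank by `rank X_L`; as the kernel of a sum of PSD
matrices is the intersection of their kernels, this forces `ker X_L ⊆ ker A ⊆ ker Bᴴ`, i.e.
`B = X_L K` for some `K`. Then `X_μ = Uᴴ (X_L ⊕ (C + μ I - Kᴴ X_L K)) U` with `U = [[I, K], [0, I]]`
unipotent, so `X_μ` is PSD of rank `rank X_L + (n - r)` as soon as `μ` exceeds minus every
eigenvalue of the Hermitian matrix `C - Kᴴ X_L K`. The same factorisation of an arbitrary PSD
completion `Z` gives `rank Z ≤ rank Z_L + (n - r) ≤ rank X_L + (n - r)`.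
-/

open Matrix
open scoped ComplexOrder

theorem LinearMap.exists_eq_comp_of_ker_le {K V W U : Type*} [DivisionRing K] [AddCommGroup V]
    [Module K V] [AddCommGroup W] [Module K W] [AddCommGroup U] [Module K U]
    (f : V →ₗ[K] W) (g : V →ₗ[K] U) (h : LinearMap.ker f ≤ LinearMap.ker g) :
    ∃ φ : W →ₗ[K] U, g = φ ∘ₗ f := by
  obtain ⟨ψ, hψ⟩ := ((LinearMap.ker f).liftQ f le_rfl).exists_leftInverse_of_injective
    ((LinearMap.ker f).ker_liftQ_eq_bot f le_rfl le_rfl)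
  refine ⟨(LinearMap.ker f).liftQ g h ∘ₗ ψ, LinearMap.ext fun x => ?_⟩
  have hx := LinearMap.congr_fun hψ (Submodule.Quotient.mk x)
  simp only [LinearMap.comp_apply, Submodule.liftQ_apply, LinearMap.id_apply] at hx ⊢
  rw [hx, Submodule.liftQ_apply]

theorem Submodule.finrank_prod {K V W : Type*} [DivisionRing K] [AddCommGroup V] [Module K V]
    [AddCommGroup W] [Module K W] (p : Submodule K V) (q : Submodule K W)
    [FiniteDimensional K p] [FiniteDimensional K q] :
    Module.finrank K (p.prod q) = Module.finrank K p + Module.finrank K q := by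
  rw [← Module.finrank_prod, ← LinearMap.finrank_range_of_inj
    (f := p.subtype.prodMap q.subtype) (p.injective_subtype.prodMap q.injective_subtype),
    LinearMap.range_prodMap, Submodule.range_subtype, Submodule.range_subtype]

namespace Matrix

variable {m n : Type*}

theorem IsHermitian.toBlocks₂₁_eq {α : Type*} [Star α] {Z : Matrix (m ⊕ n) (m ⊕ n) α}
    (hZ : Z.IsHermitian) : Z.toBlocks₂₁ = Z.toBlocks₁₂ᴴ := by
  ext i j
  exact (hZ.apply (Sum.inr i) (Sum.inl j)).symm

theorem fromBlocks_add_smul_one_apply_of_mem [DecidableEq n] {α : Type*} [Semiring α]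
    (E : Set ((m ⊕ n) × (m ⊕ n))) (hloops : ∀ j, (Sum.inr j, Sum.inr j) ∉ E)
    (a : m ⊕ n → m ⊕ n → α) (P : Matrix m m α)
    (hP : ∀ i j, (Sum.inl i, Sum.inl j) ∈ E → P i j = a (Sum.inl i) (Sum.inl j))
    (X : Matrix (m ⊕ n) (m ⊕ n) α) (hX : ∀ p q, (p, q) ∈ E → X p q = a p q) (μ : α) :
    ∀ p q, (p, q) ∈ E →
      fromBlocks P X.toBlocks₁₂ X.toBlocks₂₁ (X.toBlocks₂₂ + μ • 1) p q = a p q := by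
  rintro (i | i) (j | j) hij
  · exact hP i j hij
  · exact hX _ _ hij
  · exact hX _ _ hij
  · have hne : i ≠ j := by rintro rfl; exact hloops i hij
    simp [one_apply_ne hne, toBlocks₂₂, hX _ _ hij]

theorem exists_eq_mul_of_ker_le [Fintype m] [Fintype n] [DecidableEq m] [DecidableEq n]
    {K : Type*} [Field K] {l : Type*} (M : Matrix m n K) (N : Matrix l n K)
    (h : LinearMap.ker M.mulVecLin ≤ LinearMap.ker N.mulVecLin) :
    ∃ C : Matrix l m K, N = C * M := by
  obtain ⟨φ, hφ⟩ := LinearMap.exists_eq_comp_of_ker_le _ _ h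
  refine ⟨LinearMap.toMatrix' φ, toLin'.injective ?_⟩
  rw [toLin'_mul, toLin'_toMatrix']
  exact hφ

theorem IsHermitian.exists_eq_mul_of_ker_le [Fintype m] [DecidableEq m] {K : Type*} [Field K]
    [StarRing K] {P : Matrix m m K} (hP : P.IsHermitian) {Q : Matrix m n K}
    (h : LinearMap.ker P.mulVecLin ≤ LinearMap.ker Qᴴ.mulVecLin) :
    ∃ N : Matrix m n K, Q = P * N := by
  obtain ⟨C, hC⟩ := Matrix.exists_eq_mul_of_ker_le P Qᴴ h
  exact ⟨Cᴴ, by rw [← conjTranspose_conjTranspose Q, hC, conjTranspose_mul, hP.eq]⟩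

variable [Fintype m] [Fintype n]

theorem rank_fromBlocks_zero_zero {m' n' : Type*} [Fintype m'] [Fintype n'] [DecidableEq m']
    [DecidableEq n'] {K : Type*} [Field K] (A : Matrix m m' K) (D : Matrix n n' K) :
    (fromBlocks A 0 0 D).rank = A.rank + D.rank := by
  have hlin : toLin ((Pi.basisFun K m').prod (Pi.basisFun K n'))
      ((Pi.basisFun K m).prod (Pi.basisFun K n)) (fromBlocks A 0 0 D) =
      (toLin' A).prodMap (toLin' D) := by
    apply (LinearMap.toMatrix ((Pi.basisFun K m').prod (Pi.basisFun K n'))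
      ((Pi.basisFun K m).prod (Pi.basisFun K n))).injective
    rw [LinearMap.toMatrix_toLin]
    ext (i | i) (j | j) <;> simp [LinearMap.toMatrix_apply]
  rw [rank_eq_finrank_range_toLin _ ((Pi.basisFun K m).prod (Pi.basisFun K n))
    ((Pi.basisFun K m').prod (Pi.basisFun K n')), hlin, LinearMap.range_prodMap,
    Submodule.finrank_prod]
  rfl

theorem fromBlocks_mul_eq_conj [DecidableEq m] [DecidableEq n] {α : Type*} [Ring α] [StarRing α]
    (P : Matrix m m α) (N : Matrix m n α) (R : Matrix n n α) :
    fromBlocks P (P * N) (Nᴴ * P) R =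
      (fromBlocks 1 N 0 1)ᴴ * fromBlocks P 0 0 (R - Nᴴ * P * N) * fromBlocks 1 N 0 1 := by
  simp [fromBlocks_conjTranspose, fromBlocks_multiply, Matrix.mul_assoc]

theorem rank_fromBlocks_mul [DecidableEq m] [DecidableEq n] {K : Type*} [Field K] [StarRing K]
    (P : Matrix m m K) (N : Matrix m n K) (R : Matrix n n K) :
    (fromBlocks P (P * N) (Nᴴ * P) R).rank = P.rank + (R - Nᴴ * P * N).rank := by
  have hU : IsUnit (fromBlocks 1 N 0 1 : Matrix (m ⊕ n) (m ⊕ n) K).det := by simp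
  rw [fromBlocks_mul_eq_conj, rank_mul_eq_left_of_isUnit_det _ _ hU,
    rank_mul_eq_right_of_isUnit_det _ _ (by rwa [det_conjTranspose, isUnit_star]),
    rank_fromBlocks_zero_zero]

variable {𝕜 : Type*} [RCLike 𝕜]

theorem PosSemidef.mulVec_add_eq_zero_iff {A B : Matrix n n 𝕜} (hA : A.PosSemidef)
    (hB : B.PosSemidef) {x : n → 𝕜} : (A + B) *ᵥ x = 0 ↔ A *ᵥ x = 0 ∧ B *ᵥ x = 0 := by
  rw [← (hA.add hB).dotProduct_mulVec_zero_iff, ← hA.dotProduct_mulVec_zero_iff,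
    ← hB.dotProduct_mulVec_zero_iff, add_mulVec, dotProduct_add]
  exact add_eq_zero_iff_of_nonneg (hA.dotProduct_mulVec_nonneg x) (hB.dotProduct_mulVec_nonneg x)

theorem PosSemidef.ker_le_of_rank_add_le {A B : Matrix n n 𝕜} (hA : A.PosSemidef)
    (hB : B.PosSemidef) (h : (A + B).rank ≤ A.rank) :
    LinearMap.ker A.mulVecLin ≤ LinearMap.ker B.mulVecLin := by
  have hle : LinearMap.ker (A + B).mulVecLin ≤ LinearMap.ker A.mulVecLin :=
    fun x hx => ((hA.mulVec_add_eq_zero_iff hB).1 hx).1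
  have heq : LinearMap.ker (A + B).mulVecLin = LinearMap.ker A.mulVecLin := by
    refine Submodule.eq_of_le_of_finrank_le hle ?_
    have := (A + B).mulVecLin.finrank_range_add_finrank_ker
    have := A.mulVecLin.finrank_range_add_finrank_ker
    unfold Matrix.rank at h
    omega
  intro x hx
  rw [← heq] at hx
  exact ((hA.mulVec_add_eq_zero_iff hB).1 hx).2

theorem PosSemidef.mulVec_eq_zero_of_fromBlocks {A : Matrix m m 𝕜} {B : Matrix m n 𝕜}
    {C : Matrix n m 𝕜} {D : Matrix n n 𝕜} (h : (fromBlocks A B C D).PosSemidef) {u : m → 𝕜}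
    (hu : A *ᵥ u = 0) : C *ᵥ u = 0 := by
  have h0 : star (Sum.elim u 0) ⬝ᵥ fromBlocks A B C D *ᵥ Sum.elim u (0 : n → 𝕜) = 0 := by
    simp [fromBlocks_mulVec, Function.star_sumElim, sumElim_dotProduct_sumElim, hu]
  have h1 := congr_fun ((h.dotProduct_mulVec_zero_iff _).mp h0)
  ext j
  simpa [fromBlocks_mulVec] using h1 (Sum.inr j)

theorem PosSemidef.fromBlocks_zero {P : Matrix m m 𝕜} {S : Matrix n n 𝕜}
    (hP : P.PosSemidef) (hS : S.PosSemidef) : (fromBlocks P 0 0 S).PosSemidef := by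
  refine .of_dotProduct_mulVec_nonneg (hP.1.fromBlocks (by simp) hS.1) fun x => ?_
  obtain ⟨u, v, rfl⟩ : ∃ u v, x = Sum.elim u v := ⟨_, _, (Sum.elim_comp_inl_inr x).symm⟩
  simpa [fromBlocks_mulVec, Function.star_sumElim, sumElim_dotProduct_sumElim] using
    add_nonneg (hP.dotProduct_mulVec_nonneg u) (hS.dotProduct_mulVec_nonneg v)

theorem PosSemidef.exists_toBlocks₁₂_eq_mul [DecidableEq m] {P : Matrix m m 𝕜}
    {X : Matrix (m ⊕ n) (m ⊕ n) 𝕜} (hP : P.PosSemidef) (hX : X.PosSemidef) (h : (P + X.toBlocks₁₁).rank ≤ P.rank) :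
    ∃ K : Matrix m n 𝕜, X.toBlocks₁₂ = P * K := by
  refine hP.1.exists_eq_mul_of_ker_le fun u hu => ?_
  rw [LinearMap.mem_ker, mulVecLin_apply, ← hX.1.toBlocks₂₁_eq]
  exact (X.fromBlocks_toBlocks ▸ hX).mulVec_eq_zero_of_fromBlocks
    (hP.ker_le_of_rank_add_le (hX.submatrix Sum.inl) h hu)

variable [DecidableEq m] [DecidableEq n]

theorem PosSemidef.fromBlocks_mul {P : Matrix m m 𝕜} {N : Matrix m n 𝕜} {R : Matrix n n 𝕜}
    (hP : P.PosSemidef) (hR : (R - Nᴴ * P * N).PosSemidef) :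
    (fromBlocks P (P * N) (Nᴴ * P) R).PosSemidef := by
  rw [fromBlocks_mul_eq_conj]
  exact (hP.fromBlocks_zero hR).conjTranspose_mul_mul_same _

theorem PosSemidef.rank_fromBlocks_le {P : Matrix m m 𝕜} {Q : Matrix m n 𝕜}
    {R : Matrix n n 𝕜} (h : (fromBlocks P Q Qᴴ R).PosSemidef) :
    (fromBlocks P Q Qᴴ R).rank ≤ P.rank + Fintype.card n := by
  have hP : P.IsHermitian := (isHermitian_fromBlocks_iff.1 h.1).1
  obtain ⟨N, rfl⟩ := hP.exists_eq_mul_of_ker_le fun u hu => h.mulVec_eq_zero_of_fromBlocks hu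
  rw [conjTranspose_mul, hP.eq, rank_fromBlocks_mul]
  exact Nat.add_le_add_left (rank_le_card_height _) _

theorem PosSemidef.rank_le_rank_toBlocks₁₁_add_card {Z : Matrix (m ⊕ n) (m ⊕ n) 𝕜}
    (hZ : Z.PosSemidef) : Z.rank ≤ Z.toBlocks₁₁.rank + Fintype.card n := by
  have h : fromBlocks Z.toBlocks₁₁ Z.toBlocks₁₂ Z.toBlocks₁₂ᴴ Z.toBlocks₂₂ = Z := by
    rw [← hZ.1.toBlocks₂₁_eq, fromBlocks_toBlocks]
  rw [← h] at hZ
  simpa only [h] using hZ.rank_fromBlocks_le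

theorem IsHermitian.posDef_add_smul_one {M : Matrix n n 𝕜} (hM : M.IsHermitian) {μ : ℝ}
    (hμ : ∀ i, -hM.eigenvalues i < μ) : (M + μ • (1 : Matrix n n 𝕜)).PosDef := by
  set U := hM.eigenvectorUnitary
  have hU : IsUnit (U : Matrix n n 𝕜) := (Unitary.toUnits U).isUnit
  have hUU : (U : Matrix n n 𝕜) * star (U : Matrix n n 𝕜) = 1 := Unitary.mul_star_self_of_mem U.2
  have hμ1 : diagonal (fun _ => ((μ : ℝ) : 𝕜)) = μ • (1 : Matrix n n 𝕜) := by
    ext i j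
    simp [diagonal_apply, one_apply, RCLike.real_smul_eq_coe_mul]
  have hM' : M + μ • (1 : Matrix n n 𝕜) =
      U * diagonal (fun i => ((hM.eigenvalues i + μ : ℝ) : 𝕜)) * star (U : Matrix n n 𝕜) := by
    conv_lhs => rw [hM.spectral_theorem]
    simp only [Unitary.conjStarAlgAut_apply, RCLike.ofReal_add, ← diagonal_add]
    rw [Matrix.mul_add, Matrix.add_mul, hμ1, Matrix.mul_smul, Matrix.smul_mul, Matrix.mul_one, hUU]
    rfl
  rw [hM', hU.posDef_star_right_conjugate_iff]
  exact PosDef.diagonal fun i => RCLike.ofReal_pos.mpr (by linarith [hμ i])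

theorem IsHermitian.eventually_posDef_add_smul_one {M : Matrix n n 𝕜} (hM : M.IsHermitian) :
    ∀ᶠ μ : ℝ in Filter.atTop, (M + μ • (1 : Matrix n n 𝕜)).PosDef :=
  (Filter.eventually_all.2 fun i => Filter.eventually_gt_atTop (-hM.eigenvalues i)).mono
    fun _ => hM.posDef_add_smul_one

theorem PosSemidef.eventually_fromBlocks_add_smul_one {P : Matrix m m 𝕜} (hP : P.PosSemidef)
    (K : Matrix m n 𝕜) {R : Matrix n n 𝕜} (hR : R.IsHermitian) :
    ∀ᶠ μ : ℝ in Filter.atTop, (fromBlocks P (P * K) (Kᴴ * P) (R + μ • 1)).PosSemidef ∧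
      (fromBlocks P (P * K) (Kᴴ * P) (R + μ • 1)).rank = P.rank + Fintype.card n := by
  have hS : (R - Kᴴ * P * K).IsHermitian := hR.sub (isHermitian_conjTranspose_mul_mul K hP.1)
  filter_upwards [hS.eventually_posDef_add_smul_one] with μ hμ
  have hSchur : R + μ • 1 - Kᴴ * P * K = R - Kᴴ * P * K + μ • 1 := by abel
  rw [rank_fromBlocks_mul, hSchur, rank_of_isUnit _ hμ.isUnit]
  exact ⟨hP.fromBlocks_mul (hSchur ▸ hμ.posSemidef), rfl⟩

end Matrix

theorem max_rank_completion_general {r s : ℕ}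
    (E : Set ((Fin r ⊕ Fin s) × (Fin r ⊕ Fin s)))
    (hloops : ∀ v : Fin r ⊕ Fin s, (v, v) ∈ E ↔ ∃ i : Fin r, v = Sum.inl i)
    (a : (Fin r ⊕ Fin s) → (Fin r ⊕ Fin s) → ℝ)
    (XL : Matrix (Fin r) (Fin r) ℝ) (hXL : XL.PosSemidef)
    (hXLcomp : ∀ i j : Fin r, (Sum.inl i, Sum.inl j) ∈ E →
      XL i j = a (Sum.inl i) (Sum.inl j))
    (hXLmax : ∀ Z : Matrix (Fin r) (Fin r) ℝ, Z.PosSemidef →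
      (∀ i j : Fin r, (Sum.inl i, Sum.inl j) ∈ E →
        Z i j = a (Sum.inl i) (Sum.inl j)) → Z.rank ≤ XL.rank)
    (X : Matrix (Fin r ⊕ Fin s) (Fin r ⊕ Fin s) ℝ) (hX : X.PosSemidef)
    (hXcomp : ∀ p q : Fin r ⊕ Fin s, (p, q) ∈ E → X p q = a p q) :
    ∃ μ₀ : ℝ, ∀ μ : ℝ, μ₀ ≤ μ →
      (Matrix.fromBlocks XL X.toBlocks₁₂ X.toBlocks₂₁
          (X.toBlocks₂₂ + μ • (1 : Matrix (Fin s) (Fin s) ℝ))).PosSemidef ∧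
      (∀ p q : Fin r ⊕ Fin s, (p, q) ∈ E →
        Matrix.fromBlocks XL X.toBlocks₁₂ X.toBlocks₂₁
          (X.toBlocks₂₂ + μ • (1 : Matrix (Fin s) (Fin s) ℝ)) p q = a p q) ∧
      (Matrix.fromBlocks XL X.toBlocks₁₂ X.toBlocks₂₁
          (X.toBlocks₂₂ + μ • (1 : Matrix (Fin s) (Fin s) ℝ))).rank = XL.rank + s ∧
      (∀ Z : Matrix (Fin r ⊕ Fin s) (Fin r ⊕ Fin s) ℝ, Z.PosSemidef →
        (∀ p q : Fin r ⊕ Fin s, (p, q) ∈ E → Z p q = a p q) →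
        Z.rank ≤ (Matrix.fromBlocks XL X.toBlocks₁₂ X.toBlocks₂₁
          (X.toBlocks₂₂ + μ • (1 : Matrix (Fin s) (Fin s) ℝ))).rank) := by
  have hmid : ((1 / 2 : ℝ) • (XL + X.toBlocks₁₁)).rank ≤ XL.rank :=
    hXLmax _ ((hXL.add (hX.submatrix Sum.inl)).smul (by norm_num)) fun i j hij => by
      simp [hXLcomp i j hij, toBlocks₁₁, hXcomp _ _ hij]; ring
  rw [rank_smul_of_mem_nonZeroDivisors _ (by simp)] at hmid
  obtain ⟨K, hK⟩ := hXL.exists_toBlocks₁₂_eq_mul hX hmid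
  have hC : X.toBlocks₂₂.IsHermitian := (hX.submatrix Sum.inr).1
  obtain ⟨μ₀, hμ₀⟩ := Filter.eventually_atTop.1 (hXL.eventually_fromBlocks_add_smul_one K hC)
  refine ⟨μ₀, fun μ hμ => ?_⟩
  have hXμ : fromBlocks XL (XL * K) (Kᴴ * XL) (X.toBlocks₂₂ + μ • 1) =
      fromBlocks XL X.toBlocks₁₂ X.toBlocks₂₁ (X.toBlocks₂₂ + μ • 1) := by
    rw [hX.1.toBlocks₂₁_eq, hK, conjTranspose_mul, hXL.1.eq]
  obtain ⟨hpsd, hrank⟩ := hμ₀ μ hμ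
  rw [hXμ] at hpsd hrank
  rw [Fintype.card_fin] at hrank
  refine ⟨hpsd, fromBlocks_add_smul_one_apply_of_mem E (fun j h => by simpa using (hloops _).1 h)
    a XL hXLcomp X hXcomp μ, hrank, fun Z hZ hZcomp => ?_⟩
  calc Z.rank ≤ Z.toBlocks₁₁.rank + Fintype.card (Fin s) := hZ.rank_le_rank_toBlocks₁₁_add_card
    _ ≤ XL.rank + s := by
      rw [Fintype.card_fin]
      exact Nat.add_le_add_right (hXLmax _ (hZ.submatrix Sum.inl) fun i j => hZcomp _ _) _
    _ = _ := hrank.symm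

/-- Maximal-rank PSD completions: if `X_L` is a maximum-rank PSD completion of the
restriction of the partial matrix `a` to the looped block `L = Fin r`, and
`X = [[A, B], [Bᵀ, C]]` is any PSD completion of `a`, then for all sufficiently large
`μ` the matrix `X_μ = [[X_L, B], [Bᵀ, C + μ I]]` is a PSD completion of `a` of
maximal rank, namely `rank X_L + (n - r)`. -/
theorem max_rank_completion {r s : ℕ}
    (E : Set ((Fin r ⊕ Fin s) × (Fin r ⊕ Fin s)))
    (hloops : ∀ v : Fin r ⊕ Fin s, (v, v) ∈ E ↔ ∃ i : Fin r, v = Sum.inl i)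
    (hEsym : ∀ p q : Fin r ⊕ Fin s, (p, q) ∈ E → (q, p) ∈ E)
    (a : (Fin r ⊕ Fin s) → (Fin r ⊕ Fin s) → ℝ)
    (XL : Matrix (Fin r) (Fin r) ℝ) (hXL : XL.PosSemidef)
    (hXLcomp : ∀ i j : Fin r, (Sum.inl i, Sum.inl j) ∈ E →
      XL i j = a (Sum.inl i) (Sum.inl j))
    (hXLmax : ∀ Z : Matrix (Fin r) (Fin r) ℝ, Z.PosSemidef →
      (∀ i j : Fin r, (Sum.inl i, Sum.inl j) ∈ E →
        Z i j = a (Sum.inl i) (Sum.inl j)) → Z.rank ≤ XL.rank)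
    (X : Matrix (Fin r ⊕ Fin s) (Fin r ⊕ Fin s) ℝ) (hX : X.PosSemidef)
    (hXcomp : ∀ p q : Fin r ⊕ Fin s, (p, q) ∈ E → X p q = a p q) :
    ∃ μ₀ : ℝ, ∀ μ : ℝ, μ₀ ≤ μ →
      (Matrix.fromBlocks XL X.toBlocks₁₂ X.toBlocks₂₁
          (X.toBlocks₂₂ + μ • (1 : Matrix (Fin s) (Fin s) ℝ))).PosSemidef ∧
      (∀ p q : Fin r ⊕ Fin s, (p, q) ∈ E →
        Matrix.fromBlocks XL X.toBlocks₁₂ X.toBlocks₂₁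
          (X.toBlocks₂₂ + μ • (1 : Matrix (Fin s) (Fin s) ℝ)) p q = a p q) ∧
      (Matrix.fromBlocks XL X.toBlocks₁₂ X.toBlocks₂₁
          (X.toBlocks₂₂ + μ • (1 : Matrix (Fin s) (Fin s) ℝ))).rank = XL.rank + s ∧
      (∀ Z : Matrix (Fin r ⊕ Fin s) (Fin r ⊕ Fin s) ℝ, Z.PosSemidef →
        (∀ p q : Fin r ⊕ Fin s, (p, q) ∈ E → Z p q = a p q) →
        Z.rank ≤ (Matrix.fromBlocks XL X.toBlocks₁₂ X.toBlocks₂₁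
          (X.toBlocks₂₂ + μ • (1 : Matrix (Fin s) (Fin s) ℝ))).rank) :=
  max_rank_completion_general E hloops a XL hXL hXLcomp hXLmax X hX hXcomp
end

section
/- The partial matrix on the 4-cycle with loops given by diagonal entries 1+ε, entries a_12 = a_23 = a_34 = 1 and a_14 = −1, is PSD completable if and only if ε ≥ √2 − 1; in particular at ε = √2 − 1 it lies on the boundary of P(S^4_+) and every specified principal 2×2 submatrix is positive definite for ε > 0. -/
/-!
Write `d = 1 + ε`; every completion is `cycleCompletion d x y` for the two free entries `x`, `y`.
For `p = (√2, -1, 0, 1)` and `q = (0, 1, -√2, 1)` the free entries cancel in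
`pᵀXp + qᵀXq = 8 (d - √2)`, so completability forces `d ≥ √2`. Conversely
`vᵀ X v = (d - √2) |v|² + ((√2 v₀ + v₁ - v₃)² + (v₁ + √2 v₂ + v₃)²) / √2` for `x = y = 0`,
so the zero completion works as soon as `d ≥ √2`.
-/

open Matrix

theorem Matrix.posDef_of_pos_of_sq_lt_mul {a b c : ℝ} (ha : 0 < a) (hb : b ^ 2 < a * c) :
    (!![a, b; b, c]).PosDef := by
  refine .of_dotProduct_mulVec_pos ?_ fun v hv => ?_
  · ext i j; fin_cases i <;> fin_cases j <;> rfl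
  have hv : 0 < v 0 ^ 2 + v 1 ^ 2 := by
    simpa [dotProduct, Fin.sum_univ_two, sq] using dotProduct_star_self_pos_iff.mpr hv
  have hc : 0 < c := by nlinarith [sq_nonneg b]
  simp only [star_trivial, dotProduct, mulVec, Fin.sum_univ_two, cons_val_zero, cons_val_one,
    of_apply, cons_val', cons_val_fin_one, empty_val']
  -- `(a + c) vᵀMv = (a v₀ + b v₁)² + (b v₀ + c v₁)² + (a c - b²) |v|²`
  nlinarith [sq_nonneg (a * v 0 + b * v 1), sq_nonneg (b * v 0 + c * v 1),
    mul_pos (sub_pos.mpr hb) hv]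

def cycleCompletion (d x y : ℝ) : Matrix (Fin 4) (Fin 4) ℝ :=
  !![d, 1, x, -1; 1, d, 1, y; x, 1, d, 1; -1, y, 1, d]

theorem cycleCompletion_isHermitian (d x y : ℝ) : (cycleCompletion d x y).IsHermitian := by
  ext i j; fin_cases i <;> fin_cases j <;> rfl

theorem eq_cycleCompletion {X : Matrix (Fin 4) (Fin 4) ℝ} {d : ℝ} (hX : X.IsHermitian)
    (hd : ∀ i, X i i = d) (h01 : X 0 1 = 1) (h12 : X 1 2 = 1) (h23 : X 2 3 = 1)
    (h03 : X 0 3 = -1) : X = cycleCompletion d (X 0 2) (X 1 3) := by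
  have hsymm (i j : Fin 4) : X j i = X i j := by simpa using hX.apply i j
  ext i j
  fin_cases i <;> fin_cases j <;>
    simp [cycleCompletion, hd, h01, h12, h23, h03, hsymm 0 1, hsymm 1 2, hsymm 2 3, hsymm 0 3,
      hsymm 0 2, hsymm 1 3]

theorem dotProduct_cycleCompletion_mulVec (d x y : ℝ) (v : Fin 4 → ℝ) :
    v ⬝ᵥ (cycleCompletion d x y *ᵥ v) =
      d * (v 0 ^ 2 + v 1 ^ 2 + v 2 ^ 2 + v 3 ^ 2)
        + 2 * (v 0 * v 1 + v 1 * v 2 + v 2 * v 3 - v 0 * v 3 + x * v 0 * v 2 + y * v 1 * v 3) := by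
  simp only [cycleCompletion, dotProduct, mulVec, Fin.sum_univ_four, of_apply, cons_val',
    cons_val_zero, cons_val_one, cons_val_two, cons_val_three, cons_val_fin_one, head_cons,
    tail_cons, empty_val', head_fin_const]
  ring

theorem sqrt_two_le_of_posSemidef_cycleCompletion {d x y : ℝ}
    (h : (cycleCompletion d x y).PosSemidef) : √2 ≤ d := by
  have hp := h.dotProduct_mulVec_nonneg ![√2, -1, 0, 1]
  have hq := h.dotProduct_mulVec_nonneg ![0, 1, -√2, 1]
  simp only [star_trivial, dotProduct_cycleCompletion_mulVec, cons_val_zero, cons_val_one,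
    cons_val] at hp hq
  linear_combination (hp + hq) / 8 + d / 4 * Real.sq_sqrt zero_le_two

theorem posSemidef_cycleCompletion_zero {d : ℝ} (h : √2 ≤ d) :
    (cycleCompletion d 0 0).PosSemidef := by
  refine .of_dotProduct_mulVec_nonneg (cycleCompletion_isHermitian d 0 0) fun v => ?_
  have hsos : v ⬝ᵥ (cycleCompletion d 0 0 *ᵥ v) =
      (d - √2) * (v 0 ^ 2 + v 1 ^ 2 + v 2 ^ 2 + v 3 ^ 2)
        + √2 / 2 * ((√2 * v 0 + v 1 - v 3) ^ 2 + (v 1 + √2 * v 2 + v 3) ^ 2) := by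
    rw [dotProduct_cycleCompletion_mulVec]
    linear_combination (-(v 0 * v 1 + v 1 * v 2 + v 2 * v 3 - v 0 * v 3)
      - √2 / 2 * (v 0 ^ 2 + v 2 ^ 2)) * Real.mul_self_sqrt zero_le_two
  have hd : 0 ≤ d - √2 := sub_nonneg.mpr h
  rw [star_trivial, hsos]
  positivity

theorem setOf_completable_eq_Ici :
    {ε : ℝ | ∃ X : Matrix (Fin 4) (Fin 4) ℝ, X.PosSemidef ∧
        (∀ i : Fin 4, X i i = 1 + ε) ∧
        X 0 1 = 1 ∧ X 1 2 = 1 ∧ X 2 3 = 1 ∧ X 0 3 = -1}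
      = Set.Ici (√2 - 1) := by
  ext ε
  rw [Set.mem_Ici]
  constructor
  · rintro ⟨X, hX, hd, h01, h12, h23, h03⟩
    rw [eq_cycleCompletion hX.1 hd h01 h12 h23 h03] at hX
    linarith [sqrt_two_le_of_posSemidef_cycleCompletion hX]
  · intro h
    refine ⟨cycleCompletion (1 + ε) 0 0, posSemidef_cycleCompletion_zero (by linarith),
      fun i => ?_, rfl, rfl, rfl, rfl⟩
    fin_cases i <;> rfl

/-- The partial matrix on the 4-cycle with loops, with diagonal entries `1 + ε`,
`a₁₂ = a₂₃ = a₃₄ = 1` and `a₁₄ = -1`, is PSD completable if and only if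
`ε ≥ √2 - 1`; in particular at `ε = √2 - 1` it lies on the boundary of the set of
completable data, and every specified `2 × 2` principal submatrix is positive
definite for `ε > 0`. -/
theorem four_cycle_completion :
    ({ε : ℝ | ∃ X : Matrix (Fin 4) (Fin 4) ℝ, X.PosSemidef ∧
        (∀ i : Fin 4, X i i = 1 + ε) ∧
        X 0 1 = 1 ∧ X 1 2 = 1 ∧ X 2 3 = 1 ∧ X 0 3 = -1}
      = Set.Ici (Real.sqrt 2 - 1)) ∧
    (Real.sqrt 2 - 1) ∈ frontier {ε : ℝ | ∃ X : Matrix (Fin 4) (Fin 4) ℝ,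
        X.PosSemidef ∧ (∀ i : Fin 4, X i i = 1 + ε) ∧
        X 0 1 = 1 ∧ X 1 2 = 1 ∧ X 2 3 = 1 ∧ X 0 3 = -1} ∧
    (∀ ε : ℝ, 0 < ε →
      (Matrix.PosDef !![1 + ε, 1; 1, 1 + ε] ∧
       Matrix.PosDef !![1 + ε, -1; -1, 1 + ε])) := by
  refine ⟨setOf_completable_eq_Ici, ?_, fun ε hε => ⟨?_, ?_⟩⟩
  · rw [setOf_completable_eq_Ici, frontier_Ici]
    exact Set.mem_singleton _
  all_goals exact posDef_of_pos_of_sq_lt_mul (by linarith) (by nlinarith)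
end
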